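/- arXiv:1608.01805 — 12 statements merged into one kernel-verified Lean document; each statement's English description precedes it below -/
import Mathlib

section
/- Let P and Q be probability measures on a measurable space with densities p and q with respect to a dominating σ-finite measure μ. For 1 < α < β, the Tsallis divergence T_α(P||Q) = (1/(α-1))(∫ (p/q)^α q dμ - 1) is at most T_β(P||Q). -/
/-!
Under `P = p·μ` the Tsallis integral is a moment, `∫ (p/q)^γ q dμ = E_P[(p/q)^(γ-1)]`.
In the probability space `P` the moments satisfy Lyapunov's inequality
`M_α ≤ M_β ^ s` with `s = (α-1)/(β-1) ∈ (0,1]`, and Bernoulli's inequality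
`t ^ s - 1 ≤ s (t - 1)` converts this into `(M_α - 1)/(α-1) ≤ (M_β - 1)/(β-1)`.
-/

open MeasureTheory ENNReal

namespace ENNReal

theorem rpow_sub_one_le_ofReal_mul_sub_one {s : ℝ} (hs0 : 0 ≤ s) (hs1 : s ≤ 1)
    (y : ℝ≥0∞) :
    y ^ s - 1 ≤ ENNReal.ofReal s * (y - 1) := by
  rcases eq_or_lt_of_le hs0 with rfl | hs_pos
  · simp
  obtain rfl | hy := eq_or_ne y ⊤
  · simp [ENNReal.mul_top, hs_pos]
  obtain ⟨t, ht, rfl⟩ : ∃ t : ℝ, 0 ≤ t ∧ y = ENNReal.ofReal t :=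
    ⟨y.toReal, toReal_nonneg, (ofReal_toReal hy).symm⟩
  have bernoulli : t ^ s - 1 ≤ s * (t - 1) := by
    have := _root_.rpow_one_add_le_one_add_mul_self (s := t - 1) (by linarith) hs0 hs1
    rw [add_sub_cancel] at this
    linarith
  rw [ofReal_rpow_of_nonneg ht hs0, ← ofReal_one, ← ofReal_sub _ zero_le_one,
    ← ofReal_sub _ zero_le_one, ← ofReal_mul hs0]
  exact ofReal_le_ofReal bernoulli

theorem ofReal_inv_mul_sub_one_le {a b : ℝ} (ha : 0 < a) (hab : a ≤ b) {x y : ℝ≥0∞}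
    (h : x ≤ y ^ (a / b)) :
    ENNReal.ofReal a⁻¹ * (x - 1) ≤ ENNReal.ofReal b⁻¹ * (y - 1) :=
  calc ENNReal.ofReal a⁻¹ * (x - 1)
      ≤ ENNReal.ofReal a⁻¹ * (ENNReal.ofReal (a / b) * (y - 1)) := by
        gcongr
        exact (tsub_le_tsub_right h 1).trans <| rpow_sub_one_le_ofReal_mul_sub_one
          (div_nonneg ha.le (ha.le.trans hab)) ((div_le_one (ha.trans_le hab)).mpr hab) y
    _ = ENNReal.ofReal b⁻¹ * (y - 1) := by
        rw [← mul_assoc, ← ofReal_mul (inv_nonneg.mpr ha.le), inv_mul_eq_div,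
          div_div_cancel_left' ha.ne']

-- At `y = 0` the junk value `x / 0 = 0` makes both sides vanish, the right one since `γ - 1 > 0`.
theorem ofReal_div_rpow_mul_eq {x y γ : ℝ} (hx : 0 ≤ x) (hy : 0 ≤ y) (hγ : 1 < γ) :
    ENNReal.ofReal ((x / y) ^ γ * y)
      = ENNReal.ofReal x * ENNReal.ofReal (x / y) ^ (γ - 1) := by
  rcases eq_or_lt_of_le hy with rfl | hy_pos
  · simp [ENNReal.zero_rpow_of_pos (sub_pos.mpr hγ)]
  have hr : 0 ≤ x / y := div_nonneg hx hy_pos.le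
  have split : (x / y) ^ γ * y = x * (x / y) ^ (γ - 1) := by
    rw [← add_sub_cancel 1 γ, Real.rpow_add' hr (by linarith), add_sub_cancel_left,
      Real.rpow_one, mul_right_comm, div_mul_cancel₀ x hy_pos.ne']
  rw [split, ofReal_mul hx, ofReal_rpow_of_nonneg hr (by linarith)]

end ENNReal

namespace MeasureTheory

variable {Ω : Type*} [MeasurableSpace Ω]

theorem lintegral_ofReal_div_rpow_mul_eq_lintegral_withDensity (μ : Measure Ω) {p q : Ω → ℝ}
    (hpm : Measurable p) (hp : ∀ x, 0 ≤ p x) (hq : ∀ x, 0 ≤ q x) {γ : ℝ} (hγ : 1 < γ) :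
    ∫⁻ x, ENNReal.ofReal ((p x / q x) ^ γ * q x) ∂μ
      = ∫⁻ x, ENNReal.ofReal (p x / q x) ^ (γ - 1)
          ∂μ.withDensity fun x => ENNReal.ofReal (p x) := by
  rw [lintegral_withDensity_eq_lintegral_mul_non_measurable _ hpm.ennreal_ofReal
    (.of_forall fun _ => ofReal_lt_top)]
  exact lintegral_congr fun x => ENNReal.ofReal_div_rpow_mul_eq (hp x) (hq x) hγ

theorem lintegral_rpow_le_lintegral_rpow_rpow_div (ν : Measure Ω) [IsProbabilityMeasure ν]
    {g : Ω → ℝ≥0∞} (hg : AEMeasurable g ν) {a b : ℝ} (ha : 0 < a) (hab : a ≤ b) :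
    ∫⁻ x, g x ^ a ∂ν ≤ (∫⁻ x, g x ^ b ∂ν) ^ (a / b) := by
  have lyapunov := eLpNorm'_le_eLpNorm'_of_exponent_le ha hab ν hg.aestronglyMeasurable
  simp only [eLpNorm', enorm_eq_self, one_div] at lyapunov
  rwa [ENNReal.rpow_inv_le_iff ha, ← ENNReal.rpow_mul, inv_mul_eq_div] at lyapunov

end MeasureTheory

theorem tsallis_monotone_general {Ω : Type*} [MeasurableSpace Ω] (μ : Measure Ω)
    (p q : Ω → ℝ) (hpm : Measurable p) (hqm : Measurable q)
    (hp : ∀ x, 0 ≤ p x) (hq : ∀ x, 0 ≤ q x)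
    (hP : ∫⁻ x, ENNReal.ofReal (p x) ∂μ = 1)
    (α β : ℝ) (hα : 1 < α) (hαβ : α < β) :
    ENNReal.ofReal (α - 1)⁻¹ *
        ((∫⁻ x, ENNReal.ofReal ((p x / q x) ^ α * q x) ∂μ) - 1)
      ≤ ENNReal.ofReal (β - 1)⁻¹ *
        ((∫⁻ x, ENNReal.ofReal ((p x / q x) ^ β * q x) ∂μ) - 1) := by
  set P := μ.withDensity fun x => ENNReal.ofReal (p x)
  have : IsProbabilityMeasure P :=
    ⟨by rw [withDensity_apply _ MeasurableSet.univ, setLIntegral_univ, hP]⟩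
  rw [lintegral_ofReal_div_rpow_mul_eq_lintegral_withDensity μ hpm hp hq hα,
    lintegral_ofReal_div_rpow_mul_eq_lintegral_withDensity μ hpm hp hq (hα.trans hαβ)]
  exact ENNReal.ofReal_inv_mul_sub_one_le (sub_pos.mpr hα) (by linarith) <|
    lintegral_rpow_le_lintegral_rpow_rpow_div P (hpm.div hqm).ennreal_ofReal.aemeasurable
      (sub_pos.mpr hα) (by linarith)

/-- Monotonicity of the Tsallis divergence `T_α(P||Q)` in the index `α` for `1 < α < β`,
where `P = p·μ` and `Q = q·μ` are probability measures with densities `p, q` w.r.t. a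
σ-finite measure `μ`, and `T_α = (α-1)⁻¹ (∫ (p/q)^α q dμ - 1)` (values in `[0,∞]`). -/
theorem tsallis_monotone {Ω : Type*} [MeasurableSpace Ω] (μ : Measure Ω) [SigmaFinite μ]
    (p q : Ω → ℝ) (hpm : Measurable p) (hqm : Measurable q)
    (hp : ∀ x, 0 ≤ p x) (hq : ∀ x, 0 ≤ q x)
    (hP : ∫⁻ x, ENNReal.ofReal (p x) ∂μ = 1)
    (hQ : ∫⁻ x, ENNReal.ofReal (q x) ∂μ = 1)
    (α β : ℝ) (hα : 1 < α) (hαβ : α < β) :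
    ENNReal.ofReal (α - 1)⁻¹ *
        ((∫⁻ x, ENNReal.ofReal ((p x / q x) ^ α * q x) ∂μ) - 1)
      ≤ ENNReal.ofReal (β - 1)⁻¹ *
        ((∫⁻ x, ENNReal.ofReal ((p x / q x) ^ β * q x) ∂μ) - 1) :=
  tsallis_monotone_general μ p q hpm hqm hp hq hP α β hα hαβ
end

section
/- For α ≥ 2 and a random variable η ≥ -1 with E η = 0, one has (1/(α-1)) (E(1+η)^α - 1) ≥ ((α-1)/3^α) E|η|^α. -/
/-!
Pointwise, `|x|^α ≤ (1 + x)^α - 1 - α x` for `x ≥ -1`: split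
`(1 + x)^α = (1 + x)^(α-1) + x (1 + x)^(α-1)`, bound the first term by Bernoulli's inequality
and the second by superadditivity of `t ↦ t^(α-1)`.
Taking expectations and using `E η = 0` gives `E (1 + η)^α - 1 ≥ E |η|^α`, and the constant
`(α - 1) / 3^α` is at most `(α - 1)⁻¹` because `α - 1 ≤ 1 + α ≤ 3^(α/2)`.
-/

open MeasureTheory

namespace Real

lemma add_abs_rpow_add_one_le_mul_one_add_rpow {x p : ℝ} (hx : -1 ≤ x) (hp : 1 ≤ p) :
    x + |x| ^ (p + 1) ≤ x * (1 + x) ^ p := by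
  have hp1 : p + 1 ≠ 0 := by linarith
  rcases le_total 0 x with hx0 | hx0
  · have hsuper := add_rpow_le_rpow_add zero_le_one hx0 hp
    rw [one_rpow] at hsuper
    rw [abs_of_nonneg hx0, rpow_add_one' hx0 hp1]
    nlinarith [mul_le_mul_of_nonneg_left hsuper hx0]
  · -- here `(1 + x)^p + |x|^p ≤ 1`
    have hsuper := add_rpow_le_rpow_add (by linarith : 0 ≤ 1 + x) (neg_nonneg.2 hx0) hp
    rw [add_neg_cancel_right, one_rpow] at hsuper
    rw [abs_of_nonpos hx0, rpow_add_one' (neg_nonneg.2 hx0) hp1]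
    nlinarith

lemma abs_rpow_le_one_add_rpow_sub_one_sub_mul {x α : ℝ} (hx : -1 ≤ x) (hα : 2 ≤ α) :
    |x| ^ α ≤ (1 + x) ^ α - 1 - α * x := by
  have hbernoulli := one_add_mul_self_le_rpow_one_add hx (by linarith : 1 ≤ α - 1)
  have hmul := add_abs_rpow_add_one_le_mul_one_add_rpow hx (by linarith : 1 ≤ α - 1)
  have hsplit : (1 + x) ^ α = (1 + x) ^ (α - 1) + x * (1 + x) ^ (α - 1) := by
    rw [← one_add_mul, mul_comm, ← rpow_add_one' (by linarith) (by linarith), sub_add_cancel]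
  rw [sub_add_cancel] at hmul
  linarith

lemma sq_sub_one_le_three_rpow {α : ℝ} (hα : 2 ≤ α) : (α - 1) ^ 2 ≤ (3 : ℝ) ^ α := by
  have hbernoulli : 1 + α / 2 * 2 ≤ (1 + 2 : ℝ) ^ (α / 2) :=
    one_add_mul_self_le_rpow_one_add (by norm_num) (by linarith)
  have hsq : (3 : ℝ) ^ α = ((3 : ℝ) ^ (α / 2)) ^ 2 := by
    rw [← rpow_mul_natCast (by norm_num)]
    ring_nf
  rw [hsq]
  norm_num at hbernoulli
  exact pow_le_pow_left₀ (by linarith) (by linarith) 2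

end Real

namespace MeasureTheory

variable {Ω : Type*} [MeasurableSpace Ω] {μ : Measure Ω} {f : Ω → ℝ} {p : ℝ}

lemma AEStronglyMeasurable.of_rpow (hp : p ≠ 0) (hf : 0 ≤ᵐ[μ] f)
    (h : AEStronglyMeasurable (fun ω ↦ f ω ^ p) μ) : AEStronglyMeasurable f μ :=
  (h.aemeasurable.pow_const p⁻¹).aestronglyMeasurable.congr <| by
    filter_upwards [hf] with ω hω using Real.rpow_rpow_inv hω hp

lemma Integrable.of_rpow [IsFiniteMeasure μ] (hp : 1 ≤ p) (hf : 0 ≤ᵐ[μ] f)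
    (h : Integrable (fun ω ↦ f ω ^ p) μ) : Integrable f μ := by
  have hmeas := h.aestronglyMeasurable.of_rpow (by linarith) hf
  have hnorm : Integrable (fun ω ↦ ‖f ω‖ ^ p) μ :=
    h.congr <| by filter_upwards [hf] with ω hω using by rw [Real.norm_of_nonneg hω]
  have hnorm₁ := integrable_norm_rpow_of_le hmeas zero_le_one (by linarith) hp hnorm
  simp only [Real.rpow_one] at hnorm₁
  exact (integrable_norm_iff hmeas).1 hnorm₁

lemma integral_abs_rpow_le_integral_one_add_rpow_sub_one [IsProbabilityMeasure μ]
    {η : Ω → ℝ} {α : ℝ} (hα : 2 ≤ α) (hge : ∀ᵐ ω ∂μ, -1 ≤ η ω) (hmean : ∫ ω, η ω ∂μ = 0)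
    (hint : Integrable (fun ω ↦ (1 + η ω) ^ α) μ) :
    ∫ ω, |η ω| ^ α ∂μ ≤ ∫ ω, (1 + η ω) ^ α ∂μ - 1 := by
  have hη : Integrable η μ := by
    have h := hint.of_rpow (by linarith) <| hge.mono fun ω hω ↦ by
      simp only [Pi.zero_apply]; linarith
    exact (h.sub (integrable_const 1)).congr <|
      ae_of_all _ fun ω ↦ add_sub_cancel_left 1 (η ω)
  have hint₁ : Integrable (fun ω ↦ (1 + η ω) ^ α - 1) μ := hint.sub (integrable_const 1)
  calc ∫ ω, |η ω| ^ α ∂μ ≤ ∫ ω, ((1 + η ω) ^ α - 1 - α * η ω) ∂μ :=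
        integral_mono_of_nonneg (ae_of_all _ fun ω ↦ by positivity)
          (hint₁.sub (hη.const_mul α))
          (hge.mono fun ω hω ↦ Real.abs_rpow_le_one_add_rpow_sub_one_sub_mul hω hα)
    _ = ∫ ω, (1 + η ω) ^ α ∂μ - 1 := by
        rw [integral_sub hint₁ (hη.const_mul α), integral_sub hint (integrable_const 1),
          integral_const_mul, hmean]
        simp

end MeasureTheory

theorem tsallis_lower_bound_general {Ω : Type*} [MeasureSpace Ω]
    [IsProbabilityMeasure (volume : Measure Ω)]
    (η : Ω → ℝ) (hge : ∀ ω, -1 ≤ η ω) (hmean : (∫ ω, η ω) = 0)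
    (α : ℝ) (hα : 2 ≤ α)
    (hint : Integrable (fun ω => (1 + η ω) ^ α)) :
    ((α - 1) / 3 ^ α) * (∫ ω, |η ω| ^ α)
      ≤ (α - 1)⁻¹ * ((∫ ω, (1 + η ω) ^ α) - 1) := by
  have hα₁ : 0 < α - 1 := by linarith
  have hconst : (α - 1) / 3 ^ α ≤ (α - 1)⁻¹ := by
    rw [div_le_iff₀ (by positivity), ← div_eq_inv_mul, le_div_iff₀ hα₁, ← sq]
    exact Real.sq_sub_one_le_three_rpow hα
  calc ((α - 1) / 3 ^ α) * (∫ ω, |η ω| ^ α)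
      ≤ (α - 1)⁻¹ * (∫ ω, |η ω| ^ α) :=
        mul_le_mul_of_nonneg_right hconst (integral_nonneg fun ω ↦ by positivity)
    _ ≤ (α - 1)⁻¹ * ((∫ ω, (1 + η ω) ^ α) - 1) :=
        mul_le_mul_of_nonneg_left
          (integral_abs_rpow_le_integral_one_add_rpow_sub_one hα (ae_of_all _ hge) hmean hint)
          (by positivity)

/-- For `α ≥ 2` and a random variable `η ≥ -1` with `E η = 0`:
`(α-1)⁻¹ (E (1+η)^α - 1) ≥ ((α-1)/3^α) E |η|^α`. -/
theorem tsallis_lower_bound {Ω : Type*} [MeasureSpace Ω]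
    [IsProbabilityMeasure (volume : Measure Ω)]
    (η : Ω → ℝ) (hge : ∀ ω, -1 ≤ η ω) (hmean : (∫ ω, η ω) = 0)
    (α : ℝ) (hα : 2 ≤ α)
    (hint : Integrable (fun ω => (1 + η ω) ^ α))
    (hint' : Integrable (fun ω => |η ω| ^ α)) :
    ((α - 1) / 3 ^ α) * (∫ ω, |η ω| ^ α)
      ≤ (α - 1)⁻¹ * ((∫ ω, (1 + η ω) ^ α) - 1) :=
  tsallis_lower_bound_general η hge hmean α hα hint
end

section
/- Let X be a real random variable with density p such that C^α := ∫ p(x)^α / φ(x)^{α-1} dx is finite, where φ is the standard normal density and α > 1 with conjugate β = α/(α-1). Then for every c < 1/(2β), E e^{cX²} ≤ C / (1 - 2βc)^{1/(2β)}. -/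
/-!
Split `e^{cx²} p = (p / φ^{1/β}) · (e^{cx²} φ^{1/β})` and apply Hölder with exponents `(α, β)`.
Since `α / β = α - 1`, the `α`-th power of the first factor integrates to `C^α`; the `β`-th power
of the second is `e^{βcx²} φ`, a Gaussian integral equal to `(1 - 2βc)^{-1/2}` when `βc < 1/2`.
-/

open MeasureTheory Real

/-- The standard normal density on the real line. -/
noncomputable def stdNormalPDF (x : ℝ) : ℝ :=
  (Real.sqrt (2 * Real.pi))⁻¹ * Real.exp (-x ^ 2 / 2)

lemma stdNormalPDF_pos (x : ℝ) : 0 < stdNormalPDF x := by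
  unfold stdNormalPDF
  positivity

lemma measurable_stdNormalPDF : Measurable stdNormalPDF := by
  unfold stdNormalPDF
  fun_prop

lemma exp_mul_sq_mul_stdNormalPDF (a x : ℝ) :
    exp (a * x ^ 2) * stdNormalPDF x = (√(2 * π))⁻¹ * exp (-(1 / 2 - a) * x ^ 2) := by
  rw [stdNormalPDF, mul_left_comm, ← exp_add]
  ring_nf

lemma integral_exp_mul_sq_mul_stdNormalPDF {a : ℝ} (ha : a < 1 / 2) :
    ∫ x, exp (a * x ^ 2) * stdNormalPDF x = (1 - 2 * a) ^ (-(1 / 2) : ℝ) := by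
  have h2a : 0 < 1 - 2 * a := by linarith
  simp_rw [exp_mul_sq_mul_stdNormalPDF, integral_const_mul, integral_gaussian]
  rw [rpow_neg h2a.le, ← sqrt_eq_rpow, ← sqrt_inv, ← sqrt_inv, ← sqrt_mul (by positivity)]
  congr 1
  field_simp

lemma lintegral_exp_mul_sq_mul_stdNormalPDF {a : ℝ} (ha : a < 1 / 2) :
    ∫⁻ x, ENNReal.ofReal (exp (a * x ^ 2) * stdNormalPDF x)
      = ENNReal.ofReal ((1 - 2 * a) ^ (-(1 / 2) : ℝ)) := by
  have hint : Integrable fun x => exp (a * x ^ 2) * stdNormalPDF x := by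
    simp_rw [exp_mul_sq_mul_stdNormalPDF]
    exact (integrable_exp_neg_mul_sq (by linarith)).const_mul _
  rw [← integral_exp_mul_sq_mul_stdNormalPDF ha,
    ofReal_integral_eq_lintegral_ofReal hint
      (.of_forall fun x => mul_nonneg (exp_nonneg _) (stdNormalPDF_pos x).le)]

theorem lintegral_ofReal_mul_le_weighted_holder {Ω : Type*} [MeasurableSpace Ω] (μ : Measure Ω)
    {α β : ℝ} (hαβ : α.HolderConjugate β) {p h w : Ω → ℝ}
    (hpm : Measurable p) (hhm : Measurable h) (hwm : Measurable w)
    (hp : ∀ x, 0 ≤ p x) (hh : ∀ x, 0 ≤ h x) (hw : ∀ x, 0 < w x) :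
    ∫⁻ x, ENNReal.ofReal (h x * p x) ∂μ
      ≤ (∫⁻ x, ENNReal.ofReal (p x ^ α / w x ^ (α - 1)) ∂μ) ^ (1 / α)
        * (∫⁻ x, ENNReal.ofReal (h x ^ β * w x) ∂μ) ^ (1 / β) := by
  set f : Ω → ENNReal := fun x => ENNReal.ofReal (p x / w x ^ (1 / β))
  set g : Ω → ENNReal := fun x => ENNReal.ofReal (h x * w x ^ (1 / β))
  have hwpow (x : Ω) : 0 < w x ^ (1 / β) := rpow_pos_of_pos (hw x) _
  have hfg (x : Ω) : (f * g) x = ENNReal.ofReal (h x * p x) := by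
    rw [Pi.mul_apply, ← ENNReal.ofReal_mul (div_nonneg (hp x) (hwpow x).le), ← mul_assoc,
      mul_right_comm, div_mul_cancel₀ _ (hwpow x).ne', mul_comm]
  have hf (x : Ω) : f x ^ α = ENNReal.ofReal (p x ^ α / w x ^ (α - 1)) := by
    rw [ENNReal.ofReal_rpow_of_nonneg (div_nonneg (hp x) (hwpow x).le) hαβ.nonneg,
      div_rpow (hp x) (hwpow x).le, ← rpow_mul (hw x).le, one_div_mul_eq_div,
      hαβ.div_conj_eq_sub_one]
  have hg (x : Ω) : g x ^ β = ENNReal.ofReal (h x ^ β * w x) := by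
    rw [ENNReal.ofReal_rpow_of_nonneg (mul_nonneg (hh x) (hwpow x).le) hαβ.symm.nonneg,
      mul_rpow (hh x) (hwpow x).le, ← rpow_mul (hw x).le, one_div_mul_cancel hαβ.symm.ne_zero,
      rpow_one]
  have hholder := ENNReal.lintegral_mul_le_Lp_mul_Lq μ hαβ (f := f) (g := g)
    (by fun_prop) (by fun_prop)
  calc ∫⁻ x, ENNReal.ofReal (h x * p x) ∂μ = ∫⁻ x, (f * g) x ∂μ := by simp only [hfg]
    _ ≤ _ := hholder
    _ = _ := by simp only [hf, hg]

theorem gaussian_moment_bound_general (α β C : ℝ) (hα : 1 < α) (hβ : β = α / (α - 1)) (hC : 0 ≤ C)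
    (p : ℝ → ℝ) (hpm : Measurable p) (hp : ∀ x, 0 ≤ p x)
    (hfin : Integrable (fun x => p x ^ α / stdNormalPDF x ^ (α - 1)))
    (hCdef : (∫ x, p x ^ α / stdNormalPDF x ^ (α - 1)) = C ^ α) :
    ∀ c : ℝ, c < 1 / (2 * β) →
      (∫⁻ x, ENNReal.ofReal (Real.exp (c * x ^ 2) * p x))
        ≤ ENNReal.ofReal (C / (1 - 2 * β * c) ^ (1 / (2 * β))) := by
  intro c hc
  have hαβ : α.HolderConjugate β := (holderConjugate_iff_eq_conjExponent hα).mpr hβ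
  have hβ0 : 0 < β := hαβ.symm.pos
  have hβc : β * c < 1 / 2 := by
    rw [lt_div_iff₀ (by positivity)] at hc
    linarith
  have hpos : 0 < 1 - 2 * β * c := by linarith
  have hmoment : ∫⁻ x, ENNReal.ofReal (p x ^ α / stdNormalPDF x ^ (α - 1))
      = ENNReal.ofReal (C ^ α) := by
    rw [← hCdef, ofReal_integral_eq_lintegral_ofReal hfin (.of_forall fun x =>
      div_nonneg (rpow_nonneg (hp x) α) (rpow_nonneg (stdNormalPDF_pos x).le _))]
  have hgauss : ∫⁻ x, ENNReal.ofReal (exp (c * x ^ 2) ^ β * stdNormalPDF x)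
      = ENNReal.ofReal ((1 - 2 * β * c) ^ (-(1 / 2) : ℝ)) := by
    have hpow (x : ℝ) : exp (c * x ^ 2) ^ β = exp (β * c * x ^ 2) := by
      rw [← exp_mul]
      ring_nf
    simp_rw [hpow]
    rw [lintegral_exp_mul_sq_mul_stdNormalPDF hβc, mul_assoc]
  calc (∫⁻ x, ENNReal.ofReal (exp (c * x ^ 2) * p x))
      ≤ ENNReal.ofReal (C ^ α) ^ (1 / α)
          * ENNReal.ofReal ((1 - 2 * β * c) ^ (-(1 / 2) : ℝ)) ^ (1 / β) := by
        rw [← hmoment, ← hgauss]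
        exact lintegral_ofReal_mul_le_weighted_holder volume hαβ hpm (by fun_prop)
          measurable_stdNormalPDF hp (fun _ => exp_nonneg _) stdNormalPDF_pos
    _ = ENNReal.ofReal (C / (1 - 2 * β * c) ^ (1 / (2 * β))) := by
        rw [ENNReal.ofReal_rpow_of_nonneg (rpow_nonneg hC α) hαβ.one_div_nonneg,
          ENNReal.ofReal_rpow_of_nonneg (rpow_nonneg hpos.le _) hαβ.symm.one_div_nonneg,
          ← rpow_mul hC, ← rpow_mul hpos.le, mul_one_div_cancel hαβ.ne_zero, rpow_one,
          ← ENNReal.ofReal_mul hC, div_eq_mul_inv C, ← rpow_neg hpos.le]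
        congr 3
        field_simp

/-- If `X` has density `p` with `∫ p^α / φ^{α-1} = C^α < ∞` (`α > 1`, `β = α/(α-1)`),
then `E e^{cX²} ≤ C / (1 - 2βc)^{1/(2β)}` for all `c < 1/(2β)`. -/
theorem gaussian_moment_bound (α β C : ℝ) (hα : 1 < α) (hβ : β = α / (α - 1)) (hC : 0 ≤ C)
    (p : ℝ → ℝ) (hpm : Measurable p) (hp : ∀ x, 0 ≤ p x) (hdens : (∫ x, p x) = 1)
    (hfin : Integrable (fun x => p x ^ α / stdNormalPDF x ^ (α - 1)))
    (hCdef : (∫ x, p x ^ α / stdNormalPDF x ^ (α - 1)) = C ^ α) :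
    ∀ c : ℝ, c < 1 / (2 * β) →
      (∫⁻ x, ENNReal.ofReal (Real.exp (c * x ^ 2) * p x))
        ≤ ENNReal.ofReal (C / (1 - 2 * β * c) ^ (1 / (2 * β))) :=
  gaussian_moment_bound_general α β C hα hβ hC p hpm hp hfin hCdef
end

section
/- Let X be a random variable with all moments finite. If the series Σ_{k≥0} (E H_k(X))²/k! converges, then E X^{2k} ≤ C e^k ((2k)!)^{1/2} for all k, where C² equals the sum of the series; in particular E e^{cX²} < ∞ for some c > 0. -/
/-!
Expanding monomials in Hermite polynomials, `E X^n = Σ_j n! / ((n - 2j)! j! 2^j) E H_{n-2j}(X)`,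
and summability of `(E H_m(X))² / m!` gives `|E H_m(X)| ≤ C √(m!)`. As `n! ≤ (n - 2j)! n^{2j}`,
the `j`-th term is at most `C √(n!) (n/2)^j / j!`, so `|E X^n| ≤ C e^{n/2} √(n!)`. For `n = 2k` this
is at most `C (2e)^k k!`, so with `c = 1/(4e)` the terms of the exponential series of `c X²` have
expectations at most `C 2^{-k}`, and monotone convergence makes `e^{c X²}` integrable.
-/

open MeasureTheory Polynomial Finset
open scoped Nat

theorem Nat.factorial_two_mul_eq_mul_doubleFactorial (j : ℕ) :
    (2 * j)! = (2 * j)‼ * (2 * j - 1)‼ := by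
  cases j with
  | zero => rfl
  | succ j =>
    rw [show 2 * (j + 1) = 2 * j + 1 + 1 by ring, Nat.factorial_eq_mul_doubleFactorial]
    rfl

/-- `n! / ((n - 2j)! j! 2^j)`, the coefficient of `H_{n-2j}` in the expansion of `X^n`, in a form
that vanishes for `2j > n`. -/
def monomialHermiteCoeff (n j : ℕ) : ℕ := n.choose (2 * j) * (2 * j - 1)‼

namespace monomialHermiteCoeff

@[simp]
theorem zero_right (n : ℕ) : monomialHermiteCoeff n 0 = 1 := by
  simp [monomialHermiteCoeff]

theorem of_lt {n j : ℕ} (h : n < 2 * j) : monomialHermiteCoeff n j = 0 := by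
  simp [monomialHermiteCoeff, Nat.choose_eq_zero_of_lt h]

theorem succ_succ (n j : ℕ) :
    monomialHermiteCoeff (n + 1) (j + 1)
      = monomialHermiteCoeff n (j + 1) + (n - 2 * j) * monomialHermiteCoeff n j := by
  have hodd : (2 * j + 1)‼ = (2 * j + 1) * (2 * j - 1)‼ := Nat.doubleFactorial_add_one (2 * j)
  have hchoose : n.choose (2 * j + 1) * (2 * j + 1) = n.choose (2 * j) * (n - 2 * j) :=
    Nat.choose_succ_right_eq n (2 * j)
  simp only [monomialHermiteCoeff, show 2 * (j + 1) = 2 * j + 1 + 1 by ring,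
    Nat.add_sub_cancel, Nat.choose_succ_succ, hodd]
  linear_combination (2 * j - 1)‼ * hchoose

theorem mul_factorial_mul {n j : ℕ} (h : 2 * j ≤ n) :
    monomialHermiteCoeff n j * ((n - 2 * j)! * (2 ^ j * j !)) = n ! := by
  rw [← Nat.doubleFactorial_two_mul, ← Nat.choose_mul_factorial_mul_factorial h,
    monomialHermiteCoeff, Nat.factorial_two_mul_eq_mul_doubleFactorial]
  ring

end monomialHermiteCoeff

namespace Polynomial

theorem derivative_hermite_succ (n : ℕ) :
    derivative (hermite (n + 1)) = (n + 1 : ℤ[X]) * hermite n := by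
  induction n with
  | zero => simp [hermite_zero]
  | succ n ih =>
    rw [hermite_succ (n + 1), derivative_sub, derivative_mul, derivative_X, ih, derivative_mul]
    simp only [derivative_add, derivative_natCast, derivative_one]
    push_cast
    linear_combination (-(n : ℤ[X]) - 1) * hermite_succ n

theorem X_mul_hermite (n : ℕ) : X * hermite n = hermite (n + 1) + n • hermite (n - 1) := by
  cases n with
  | zero => simp
  | succ n =>
    rw [hermite_succ (n + 1), derivative_hermite_succ, Nat.add_sub_cancel, nsmul_eq_mul]
    push_cast
    ring

theorem X_mul_smul_hermite (n j : ℕ) :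
    X * (monomialHermiteCoeff n j • hermite (n - 2 * j))
      = monomialHermiteCoeff n j • hermite (n + 1 - 2 * j)
        + ((n - 2 * j) * monomialHermiteCoeff n j) • hermite (n + 1 - 2 * (j + 1)) := by
  rcases le_or_gt (2 * j) n with h | h
  · rw [mul_smul_comm, X_mul_hermite, show n - 2 * j + 1 = n + 1 - 2 * j by omega,
      show n - 2 * j - 1 = n + 1 - 2 * (j + 1) by omega, smul_add, mul_smul, smul_comm]
  · simp [monomialHermiteCoeff.of_lt h]

theorem X_pow_eq_sum_hermite (n : ℕ) :
    (X : ℤ[X]) ^ n = ∑ j ∈ range (n + 1), monomialHermiteCoeff n j • hermite (n - 2 * j) := by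
  induction n with
  | zero => simp [hermite_zero]
  | succ n ih =>
    have hext : ∑ j ∈ range (n + 1), monomialHermiteCoeff n j • hermite (n + 1 - 2 * j)
        = ∑ j ∈ range (n + 2), monomialHermiteCoeff n j • hermite (n + 1 - 2 * j) := by
      rw [sum_range_succ _ (n + 1), monomialHermiteCoeff.of_lt (by omega), zero_smul, add_zero]
    rw [pow_succ', ih, mul_sum]
    simp only [X_mul_smul_hermite, sum_add_distrib]
    rw [hext, sum_range_succ' _ (n + 1), sum_range_succ' _ (n + 1)]
    simp only [monomialHermiteCoeff.succ_succ, add_smul, sum_add_distrib,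
      monomialHermiteCoeff.zero_right]
    ring

end Polynomial

theorem monomialHermiteCoeff.mul_sqrt_factorial_le (n j : ℕ) :
    (monomialHermiteCoeff n j : ℝ) * √((n - 2 * j)! : ℝ)
      ≤ √(n ! : ℝ) * ((n / 2 : ℝ) ^ j / j !) := by
  rcases lt_or_ge n (2 * j) with h | h
  · rw [monomialHermiteCoeff.of_lt h, Nat.cast_zero, zero_mul]
    positivity
  have hcDP : (monomialHermiteCoeff n j : ℝ) * ((n - 2 * j)! * (2 ^ j * j !)) = n ! := by
    exact_mod_cast monomialHermiteCoeff.mul_factorial_mul h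
  have hF : (n ! : ℝ) ≤ (n - 2 * j)! * (n : ℝ) ^ (2 * j) := by
    rw [← Nat.factorial_mul_descFactorial h]
    exact_mod_cast Nat.mul_le_mul_left _ (Nat.descFactorial_le_pow n (2 * j))
  have hD : (0 : ℝ) < (n - 2 * j)! := by positivity
  have hP : (0 : ℝ) < 2 ^ j * j ! := by positivity
  rw [div_pow, div_div, mul_div_assoc', le_div_iff₀ hP]
  refine (pow_le_pow_iff_left₀ (by positivity) (by positivity) two_ne_zero).mp ?_
  simp only [mul_pow, Real.sq_sqrt hD.le, Real.sq_sqrt (Nat.cast_nonneg _), ← pow_mul,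
    mul_comm j 2]
  refine le_of_mul_le_mul_left ?_ hD
  calc _ = (n ! : ℝ) * n ! := by rw [← hcDP]; ring
    _ ≤ n ! * ((n - 2 * j)! * n ^ (2 * j)) := by gcongr
    _ = _ := by ring

theorem abs_sum_monomialHermiteCoeff_mul_le {a : ℕ → ℝ} {C : ℝ}
    (ha : ∀ m, |a m| ≤ C * √(m ! : ℝ)) (n : ℕ) :
    |∑ j ∈ range (n + 1), (monomialHermiteCoeff n j : ℝ) * a (n - 2 * j)|
      ≤ C * Real.exp (n / 2) * √(n ! : ℝ) := by
  have hC : 0 ≤ C := by simpa using (abs_nonneg _).trans (ha 0)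
  calc _ ≤ ∑ j ∈ range (n + 1), (monomialHermiteCoeff n j : ℝ) * (C * √((n - 2 * j)! : ℝ)) := by
        refine (abs_sum_le_sum_abs _ _).trans (sum_le_sum fun j _ => ?_)
        rw [abs_mul, Nat.abs_cast]
        exact mul_le_mul_of_nonneg_left (ha _) (Nat.cast_nonneg _)
    _ ≤ ∑ j ∈ range (n + 1), C * (√(n ! : ℝ) * ((n / 2 : ℝ) ^ j / j !)) := by
        refine sum_le_sum fun j _ => ?_
        rw [mul_left_comm]
        exact mul_le_mul_of_nonneg_left (monomialHermiteCoeff.mul_sqrt_factorial_le n j) hC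
    _ = C * √(n ! : ℝ) * ∑ j ∈ range (n + 1), (n / 2 : ℝ) ^ j / j ! := by
        rw [mul_sum]; simp only [mul_assoc]
    _ ≤ C * √(n ! : ℝ) * Real.exp (n / 2) := by
        gcongr
        exact Real.sum_le_exp_of_nonneg (by positivity) _
    _ = _ := by ring

theorem abs_le_sqrt_tsum_mul_sqrt_factorial {a : ℕ → ℝ}
    (ha : Summable fun k => a k ^ 2 / k !) (n : ℕ) :
    |a n| ≤ √(∑' k, a k ^ 2 / k !) * √(n ! : ℝ) := by
  rw [← Real.sqrt_mul (tsum_nonneg fun k => by positivity), ← Real.sqrt_sq_eq_abs]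
  refine Real.sqrt_le_sqrt ?_
  rw [← div_le_iff₀ (by positivity)]
  exact ha.le_tsum n fun k _ => by positivity

theorem Nat.factorial_two_mul_le_four_pow_mul (k : ℕ) : (2 * k)! ≤ 4 ^ k * (k ! * k !) := by
  calc (2 * k)! = centralBinom k * (k ! * k !) := by
        rw [centralBinom_eq_two_mul_choose, ← mul_assoc,
          ← Nat.choose_mul_factorial_mul_factorial (show k ≤ 2 * k by omega), two_mul,
          Nat.add_sub_cancel]
    _ ≤ 4 ^ k * (k ! * k !) := Nat.mul_le_mul_right _ (Nat.centralBinom_le_four_pow k)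

theorem Real.sqrt_factorial_two_mul_le (k : ℕ) : √((2 * k)! : ℝ) ≤ 2 ^ k * k ! := by
  rw [Real.sqrt_le_left (by positivity), mul_pow, ← pow_mul, mul_comm k 2, pow_mul]
  exact_mod_cast (Nat.factorial_two_mul_le_four_pow_mul k).trans_eq (by ring)

section Moments

variable {Ω : Type*} [MeasurableSpace Ω] {μ : Measure Ω} {X : Ω → ℝ}

theorem integrable_pow_of_integrable_abs_pow (hX : AEStronglyMeasurable X μ) {k : ℕ}
    (hk : Integrable (fun ω => |X ω| ^ k) μ) : Integrable (fun ω => X ω ^ k) μ :=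
  (integrable_norm_iff (hX.pow k)).mp (by simpa [abs_pow] using hk)

theorem integrable_aeval {R : Type*} [CommSemiring R] [Algebra R ℝ]
    (hX : AEStronglyMeasurable X μ) (hmom : ∀ k : ℕ, Integrable (fun ω => |X ω| ^ k) μ)
    (p : R[X]) : Integrable (fun ω => aeval (X ω) p) μ := by
  simp_rw [aeval_def, eval₂_eq_sum_range]
  exact integrable_finsetSum _ fun i _ =>
    (integrable_pow_of_integrable_abs_pow hX (hmom i)).const_mul _

theorem integral_pow_eq_sum_hermite (hX : AEStronglyMeasurable X μ)
    (hmom : ∀ k : ℕ, Integrable (fun ω => |X ω| ^ k) μ) (n : ℕ) :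
    ∫ ω, X ω ^ n ∂μ = ∑ j ∈ range (n + 1),
      (monomialHermiteCoeff n j : ℝ) * ∫ ω, aeval (X ω) (hermite (n - 2 * j)) ∂μ := by
  have hpow (x : ℝ) : x ^ n = ∑ j ∈ range (n + 1),
      (monomialHermiteCoeff n j : ℝ) * aeval x (hermite (n - 2 * j)) := by
    simpa [map_sum, map_nsmul, nsmul_eq_mul] using congr_arg (aeval x) (X_pow_eq_sum_hermite n)
  simp_rw [hpow]
  rw [integral_finsetSum _ fun j _ => (integrable_aeval hX hmom _).const_mul _]
  simp_rw [integral_const_mul]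

theorem integrable_exp_of_summable_integral_pow_div_factorial {Y : Ω → ℝ} (hY : 0 ≤ᵐ[μ] Y)
    (hint : ∀ k : ℕ, Integrable (fun ω => Y ω ^ k) μ)
    (hsum : Summable fun k : ℕ => ∫ ω, Y ω ^ k / k ! ∂μ) :
    Integrable (fun ω => Real.exp (Y ω)) μ := by
  have hmeas : AEStronglyMeasurable Y μ := by simpa using (hint 1).aestronglyMeasurable
  have hterm (k : ℕ) : Integrable (fun ω => Y ω ^ k / k !) μ := (hint k).div_const _
  have hterm_nonneg (k : ℕ) : 0 ≤ᵐ[μ] fun ω => Y ω ^ k / k ! := by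
    filter_upwards [hY] with ω hω using div_nonneg (pow_nonneg hω k) (Nat.cast_nonneg _)
  refine ⟨Real.continuous_exp.comp_aestronglyMeasurable hmeas, ?_⟩
  rw [hasFiniteIntegral_iff_ofReal (ae_of_all _ fun ω => (Real.exp_pos _).le)]
  calc ∫⁻ ω, ENNReal.ofReal (Real.exp (Y ω)) ∂μ
      = ∫⁻ ω, ∑' k : ℕ, ENNReal.ofReal (Y ω ^ k / k !) ∂μ := by
        refine lintegral_congr_ae ?_
        filter_upwards [hY] with ω hω
        rw [Real.exp_eq_exp_ℝ, congr_fun NormedSpace.exp_eq_tsum_div (Y ω),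
          ENNReal.ofReal_tsum_of_nonneg (fun k => div_nonneg (pow_nonneg hω k) (Nat.cast_nonneg _))
            (Real.summable_pow_div_factorial _)]
    _ = ∑' k : ℕ, ENNReal.ofReal (∫ ω, Y ω ^ k / k ! ∂μ) := by
        rw [lintegral_tsum fun k => (hterm k).aemeasurable.ennreal_ofReal]
        exact tsum_congr fun k =>
          (ofReal_integral_eq_lintegral_ofReal (hterm k) (hterm_nonneg k)).symm
    _ = ENNReal.ofReal (∑' k : ℕ, ∫ ω, Y ω ^ k / k ! ∂μ) :=
        (ENNReal.ofReal_tsum_of_nonneg (fun k => integral_nonneg_of_ae (hterm_nonneg k)) hsum).symm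
    _ < ⊤ := ENNReal.ofReal_lt_top

theorem integrable_exp_mul_sq_of_integral_pow_le
    (hint : ∀ k : ℕ, Integrable (fun ω => X ω ^ (2 * k)) μ) {A B c : ℝ}
    (hbound : ∀ k : ℕ, ∫ ω, X ω ^ (2 * k) ∂μ ≤ A * B ^ k * k !) (hB : 0 ≤ B) (hc : 0 ≤ c)
    (hcB : c * B < 1) :
    Integrable (fun ω => Real.exp (c * X ω ^ 2)) μ := by
  have hpow (k : ℕ) : (fun ω => (c * X ω ^ 2) ^ k) = fun ω => c ^ k * X ω ^ (2 * k) := by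
    simp_rw [mul_pow, ← pow_mul]
  refine integrable_exp_of_summable_integral_pow_div_factorial (ae_of_all _ fun ω => by positivity)
    (fun k => by rw [hpow]; exact (hint k).const_mul _) ?_
  refine Summable.of_nonneg_of_le (fun k => integral_nonneg fun ω => by positivity) (fun k => ?_)
    ((summable_geometric_of_lt_one (by positivity) hcB).mul_left A)
  calc ∫ ω, (c * X ω ^ 2) ^ k / k ! ∂μ = c ^ k / k ! * ∫ ω, X ω ^ (2 * k) ∂μ := by
        rw [← integral_const_mul]
        congr 1 with ω
        rw [mul_pow, ← pow_mul]
        ring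
    _ ≤ c ^ k / k ! * (A * B ^ k * k !) := by gcongr; exact hbound k
    _ = A * (c * B) ^ k := by field_simp; ring

end Moments

theorem moment_bound_of_normal_moments_general {Ω : Type*} [MeasureSpace Ω]
    (X : Ω → ℝ) (hX : Measurable X)
    (hmom : ∀ k : ℕ, Integrable (fun ω => |X ω| ^ k))
    (hsum : Summable (fun k : ℕ =>
      (∫ ω, (Polynomial.aeval (X ω) (Polynomial.hermite k) : ℝ)) ^ 2 / (k.factorial : ℝ))) :
    (∀ k : ℕ, (∫ ω, X ω ^ (2 * k))
        ≤ Real.sqrt (∑' k : ℕ,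
            (∫ ω, (Polynomial.aeval (X ω) (Polynomial.hermite k) : ℝ)) ^ 2 / (k.factorial : ℝ))
          * Real.exp k * Real.sqrt ((2 * k).factorial : ℝ)) ∧
    ∃ c : ℝ, 0 < c ∧ Integrable (fun ω => Real.exp (c * X ω ^ 2)) := by
  set C := √(∑' k : ℕ, (∫ ω, (aeval (X ω) (hermite k) : ℝ)) ^ 2 / k !)
  have hmoment (n : ℕ) : |∫ ω, X ω ^ n| ≤ C * Real.exp (n / 2) * √(n ! : ℝ) := by
    rw [integral_pow_eq_sum_hermite hX.aestronglyMeasurable hmom]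
    exact abs_sum_monomialHermiteCoeff_mul_le (abs_le_sqrt_tsum_mul_sqrt_factorial hsum) n
  have heven (k : ℕ) : ∫ ω, X ω ^ (2 * k) ≤ C * Real.exp k * √((2 * k)! : ℝ) := by
    simpa using (le_abs_self _).trans (hmoment (2 * k))
  refine ⟨heven, (4 * Real.exp 1)⁻¹, by positivity,
    integrable_exp_mul_sq_of_integral_pow_le (A := C) (B := 2 * Real.exp 1)
      (fun k => integrable_pow_of_integrable_abs_pow hX.aestronglyMeasurable (hmom _))
      (fun k => ?_) (by positivity) (by positivity) ?_⟩
  · calc _ ≤ C * Real.exp k * √((2 * k)! : ℝ) := heven k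
      _ ≤ C * Real.exp k * (2 ^ k * k !) := by gcongr; exact Real.sqrt_factorial_two_mul_le k
      _ = C * (2 * Real.exp 1) ^ k * k ! := by rw [mul_pow, ← Real.exp_nat_mul, mul_one]; ring
  · rw [inv_mul_lt_one₀ (by positivity)]
    linarith [Real.exp_pos 1]

/-- If `X` has all moments finite and `Σ_k (E H_k(X))²/k!` converges with sum `C²`, then
`E X^{2k} ≤ C e^k ((2k)!)^{1/2}` for all `k`; in particular `E e^{cX²} < ∞` for some `c > 0`. -/
theorem moment_bound_of_normal_moments {Ω : Type*} [MeasureSpace Ω]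
    [IsProbabilityMeasure (volume : Measure Ω)]
    (X : Ω → ℝ) (hX : Measurable X)
    (hmom : ∀ k : ℕ, Integrable (fun ω => |X ω| ^ k))
    (hsum : Summable (fun k : ℕ =>
      (∫ ω, (Polynomial.aeval (X ω) (Polynomial.hermite k) : ℝ)) ^ 2 / (k.factorial : ℝ))) :
    (∀ k : ℕ, (∫ ω, X ω ^ (2 * k))
        ≤ Real.sqrt (∑' k : ℕ,
            (∫ ω, (Polynomial.aeval (X ω) (Polynomial.hermite k) : ℝ)) ^ 2 / (k.factorial : ℝ))
          * Real.exp k * Real.sqrt ((2 * k).factorial : ℝ)) ∧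
    ∃ c : ℝ, 0 < c ∧ Integrable (fun ω => Real.exp (c * X ω ^ 2)) :=
  moment_bound_of_normal_moments_general X hX hmom hsum
end

section
/- Let X, Y be independent random variables with finite χ² distance to Z ~ N(0,1), and a, b real with a² + b² = 1. Then 1 + χ²(aX + bY, Z) ≤ (1 + χ²(X,Z)) (1 + χ²(Y,Z)). -/
/-!
Write the laws of `X`, `Y` as `f γ`, `g γ` with `γ = N(0,1)`, so that by independence `(X, Y)` has
density `f ⊗ g` with respect to `γ ⊗ γ`. The reflection `R (x, y) = (a x + b y, b x - a y)` is an
involutive isometry, hence preserves `γ ⊗ γ`; thus `R (X, Y)` has density `(f ⊗ g) ∘ R`, and its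
first coordinate `a X + b Y` has density `k u = ∫ f (a u + b w) g (b u - a w) dγ(w)`. Jensen's
inequality on each fibre gives `∫ k² dγ ≤ ∫ ((f ⊗ g) ∘ R)² d(γ ⊗ γ) = ∫ f² dγ · ∫ g² dγ`.
-/

open MeasureTheory ProbabilityTheory Classical
open scoped ENNReal

/-- `1 + χ²(ν, N(0,1))`, as a value in `[0,∞]`: equal to `∫ (dν/dγ)² dγ` when
`ν ≪ γ = N(0,1)`, and `∞` otherwise (in particular when `ν` has no density). -/

noncomputable def onePlusChiSq (ν : Measure ℝ) : ℝ≥0∞ :=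
  if ν ≪ gaussianReal 0 1 then
    ∫⁻ x, (ν.rnDeriv (gaussianReal 0 1) x) ^ 2 ∂(gaussianReal 0 1)
  else ⊤

open scoped NNReal

section

variable {α β : Type*} [MeasurableSpace α] [MeasurableSpace β] {μ : Measure α} {ν : Measure β}

theorem sq_lintegral_le_lintegral_sq [IsProbabilityMeasure μ] {f : α → ℝ≥0∞}
    (hf : AEMeasurable f μ) : (∫⁻ x, f x ∂μ) ^ 2 ≤ ∫⁻ x, f x ^ 2 ∂μ := by
  have holder := ENNReal.lintegral_mul_le_Lp_mul_Lq μ Real.HolderConjugate.two_two hf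
    aemeasurable_const (g := 1)
  simp only [Pi.mul_apply, Pi.one_apply, mul_one, one_pow, ENNReal.one_rpow, lintegral_const,
    measure_univ, ENNReal.rpow_two] at holder
  calc (∫⁻ x, f x ∂μ) ^ 2 ≤ ((∫⁻ x, f x ^ 2 ∂μ) ^ (1 / 2 : ℝ)) ^ (2 : ℝ) := by
        rw [ENNReal.rpow_two]; gcongr
    _ = ∫⁻ x, f x ^ 2 ∂μ := by rw [← ENNReal.rpow_mul]; norm_num

theorem MeasurableEquiv.map_withDensity (e : α ≃ᵐ β) (h : α → ℝ≥0∞) :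
    (μ.withDensity h).map e = (μ.map e).withDensity (h ∘ e.symm) := by
  ext s hs
  rw [e.map_apply, withDensity_apply _ (e.measurable hs), withDensity_apply _ hs, e.restrict_map,
    lintegral_map_equiv]
  simp

theorem map_fst_prod_withDensity [SFinite μ] [SFinite ν] {h : α × β → ℝ≥0∞}
    (hh : Measurable h) :
    ((μ.prod ν).withDensity h).map Prod.fst = μ.withDensity fun x ↦ ∫⁻ y, h (x, y) ∂ν := by
  ext s hs
  rw [Measure.map_apply measurable_fst hs, withDensity_apply _ (measurable_fst hs),
    withDensity_apply _ hs, ← Set.prod_univ, ← Measure.prod_restrict,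
    lintegral_prod _ hh.aemeasurable, Measure.restrict_univ]

theorem lintegral_sq_lintegral_le_lintegral_prod_sq [IsProbabilityMeasure ν]
    {h : α × β → ℝ≥0∞} (hh : Measurable h) :
    ∫⁻ x, (∫⁻ y, h (x, y) ∂ν) ^ 2 ∂μ ≤ ∫⁻ z, h z ^ 2 ∂(μ.prod ν) := by
  rw [lintegral_prod _ (hh.pow_const 2).aemeasurable]
  exact lintegral_mono fun x ↦
    sq_lintegral_le_lintegral_sq (hh.comp measurable_prodMk_left).aemeasurable

end

section PlaneReflection

noncomputable def planeReflection (a b : ℝ) (hab : a ^ 2 + b ^ 2 = 1) :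
    (ℝ × ℝ) ≃ᵐ (ℝ × ℝ) where
  toFun z := (a * z.1 + b * z.2, b * z.1 - a * z.2)
  invFun z := (a * z.1 + b * z.2, b * z.1 - a * z.2)
  left_inv z := Prod.ext (by linear_combination z.1 * hab) (by linear_combination z.2 * hab)
  right_inv z := Prod.ext (by linear_combination z.1 * hab) (by linear_combination z.2 * hab)
  measurable_toFun := by dsimp only [Equiv.coe_fn_mk]; fun_prop
  measurable_invFun := by dsimp only [Equiv.coe_fn_symm_mk]; fun_prop

variable {a b : ℝ} (hab : a ^ 2 + b ^ 2 = 1)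

@[simp]
theorem planeReflection_apply (z : ℝ × ℝ) :
    planeReflection a b hab z = (a * z.1 + b * z.2, b * z.1 - a * z.2) := rfl

@[simp]
theorem planeReflection_symm : (planeReflection a b hab).symm = planeReflection a b hab := rfl

theorem map_planeReflection_volume :
    (volume : Measure (ℝ × ℝ)).map (planeReflection a b hab) = volume := by
  set L := Matrix.toLin (Module.Basis.finTwoProd ℝ) (Module.Basis.finTwoProd ℝ) !![a, b; b, -a]
  have hL : ⇑L = planeReflection a b hab := by
    funext z
    rw [Matrix.toLin_finTwoProd_apply, planeReflection_apply]
    ring_nf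
  have hdet : LinearMap.det L = -1 := by
    rw [LinearMap.det_toLin, Matrix.det_fin_two_of]
    linear_combination -hab
  rw [← hL, Measure.map_linearMap_addHaar_eq_smul_addHaar _ (by simp [hdet]), hdet]
  simp

theorem gaussianPDF_mul_gaussianPDF_eq (v : ℝ≥0) {x y x' y' : ℝ}
    (h : x ^ 2 + y ^ 2 = x' ^ 2 + y' ^ 2) :
    gaussianPDF 0 v x * gaussianPDF 0 v y = gaussianPDF 0 v x' * gaussianPDF 0 v y' := by
  simp only [gaussianPDF, gaussianPDFReal, sub_zero]
  rw [← ENNReal.ofReal_mul (by positivity), ← ENNReal.ofReal_mul (by positivity),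
    mul_mul_mul_comm, mul_mul_mul_comm _ (Real.exp _), ← Real.exp_add, ← Real.exp_add,
    ← add_div, ← add_div, ← neg_add, ← neg_add, h]

theorem measurePreserving_planeReflection (v : ℝ≥0) :
    MeasurePreserving (planeReflection a b hab) ((gaussianReal 0 v).prod (gaussianReal 0 v))
      ((gaussianReal 0 v).prod (gaussianReal 0 v)) := by
  refine ⟨(planeReflection a b hab).measurable, ?_⟩
  rcases eq_or_ne v 0 with rfl | hv
  · simp [Measure.dirac_prod_dirac, Measure.map_dirac' (planeReflection a b hab).measurable]
  rw [gaussianReal_of_var_ne_zero 0 hv, prod_withDensity (measurable_gaussianPDF 0 v)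
    (measurable_gaussianPDF 0 v), ← Measure.volume_eq_prod, MeasurableEquiv.map_withDensity,
    map_planeReflection_volume]
  congr 1
  funext z
  refine gaussianPDF_mul_gaussianPDF_eq v ?_
  simp only [planeReflection_symm, planeReflection_apply]
  linear_combination (z.1 ^ 2 + z.2 ^ 2) * hab

end PlaneReflection

section WeightedSum

variable {Ω : Type*} [MeasurableSpace Ω] {P : Measure Ω} [IsFiniteMeasure P] {X Y : Ω → ℝ}
  {v : ℝ≥0} {f g : ℝ → ℝ≥0∞} {a b : ℝ}

theorem map_weightedSum_eq_withDensity (hX : Measurable X) (hY : Measurable Y)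
    (hXY : IndepFun X Y P) (hf : Measurable f) (hg : Measurable g)
    (hXf : P.map X = (gaussianReal 0 v).withDensity f)
    (hYg : P.map Y = (gaussianReal 0 v).withDensity g) (hab : a ^ 2 + b ^ 2 = 1) :
    P.map (fun ω ↦ a * X ω + b * Y ω) = (gaussianReal 0 v).withDensity
      fun u ↦ ∫⁻ w, f (a * u + b * w) * g (b * u - a * w) ∂gaussianReal 0 v := by
  set R := planeReflection a b hab
  have hjoint : P.map (fun ω ↦ (X ω, Y ω))
      = ((gaussianReal 0 v).prod (gaussianReal 0 v)).withDensity fun z ↦ f z.1 * g z.2 := by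
    rw [(indepFun_iff_map_prod_eq_prod_map_map hX.aemeasurable hY.aemeasurable).mp hXY, hXf, hYg,
      prod_withDensity hf hg]
  have hsum : (fun ω ↦ a * X ω + b * Y ω) = Prod.fst ∘ R ∘ fun ω ↦ (X ω, Y ω) := rfl
  rw [hsum, ← Measure.map_map measurable_fst (R.measurable.comp (hX.prodMk hY)),
    ← Measure.map_map R.measurable (hX.prodMk hY), hjoint, MeasurableEquiv.map_withDensity,
    (measurePreserving_planeReflection hab v).map_eq, map_fst_prod_withDensity (by fun_prop)]
  rfl

theorem lintegral_sq_reflected_density_le (hf : Measurable f) (hg : Measurable g)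
    (hab : a ^ 2 + b ^ 2 = 1) :
    ∫⁻ u, (∫⁻ w, f (a * u + b * w) * g (b * u - a * w) ∂gaussianReal 0 v) ^ 2 ∂gaussianReal 0 v
      ≤ (∫⁻ x, f x ^ 2 ∂gaussianReal 0 v) * ∫⁻ x, g x ^ 2 ∂gaussianReal 0 v := by
  set R := planeReflection a b hab
  calc _ ≤ ∫⁻ z, (f (R z).1 * g (R z).2) ^ 2 ∂(gaussianReal 0 v).prod (gaussianReal 0 v) :=
        lintegral_sq_lintegral_le_lintegral_prod_sq (by fun_prop)
    _ = ∫⁻ z, f z.1 ^ 2 * g z.2 ^ 2 ∂(gaussianReal 0 v).prod (gaussianReal 0 v) := by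
        simp_rw [mul_pow]
        exact (measurePreserving_planeReflection hab v).lintegral_comp_emb R.measurableEmbedding
          fun z ↦ f z.1 ^ 2 * g z.2 ^ 2
    _ = _ := lintegral_prod_mul (hf.pow_const 2).aemeasurable (hg.pow_const 2).aemeasurable

end WeightedSum

theorem absolutelyContinuous_of_onePlusChiSq_ne_top {ν : Measure ℝ} (h : onePlusChiSq ν ≠ ⊤) :
    ν ≪ gaussianReal 0 1 := by
  by_contra hac
  exact h (if_neg hac)

theorem onePlusChiSq_of_absolutelyContinuous {ν : Measure ℝ} (h : ν ≪ gaussianReal 0 1) :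
    onePlusChiSq ν = ∫⁻ x, ν.rnDeriv (gaussianReal 0 1) x ^ 2 ∂gaussianReal 0 1 :=
  if_pos h

theorem onePlusChiSq_withDensity {k : ℝ → ℝ≥0∞} (hk : Measurable k) :
    onePlusChiSq ((gaussianReal 0 1).withDensity k) = ∫⁻ x, k x ^ 2 ∂gaussianReal 0 1 := by
  rw [onePlusChiSq_of_absolutelyContinuous (withDensity_absolutelyContinuous _ _)]
  refine lintegral_congr_ae ?_
  filter_upwards [Measure.rnDeriv_withDensity _ hk] with x hx
  rw [hx]

/-- For independent `X, Y` with finite χ²-distance to `Z ~ N(0,1)` and `a² + b² = 1`: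
`1 + χ²(aX + bY, Z) ≤ (1 + χ²(X,Z)) (1 + χ²(Y,Z))`. -/
theorem chiSq_submultiplicative {Ω : Type*} [MeasureSpace Ω]
    [IsProbabilityMeasure (volume : Measure Ω)]
    (X Y : Ω → ℝ) (hX : Measurable X) (hY : Measurable Y)
    (hindep : IndepFun X Y)
    (hXfin : onePlusChiSq (Measure.map X volume) ≠ ⊤)
    (hYfin : onePlusChiSq (Measure.map Y volume) ≠ ⊤)
    (a b : ℝ) (hab : a ^ 2 + b ^ 2 = 1) :
    onePlusChiSq (Measure.map (fun ω => a * X ω + b * Y ω) volume)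
      ≤ onePlusChiSq (Measure.map X volume) * onePlusChiSq (Measure.map Y volume) := by
  have hXac := absolutelyContinuous_of_onePlusChiSq_ne_top hXfin
  have hYac := absolutelyContinuous_of_onePlusChiSq_ne_top hYfin
  have hf := Measure.measurable_rnDeriv (volume.map X) (gaussianReal 0 1)
  have hg := Measure.measurable_rnDeriv (volume.map Y) (gaussianReal 0 1)
  rw [map_weightedSum_eq_withDensity hX hY hindep hf hg
      (Measure.withDensity_rnDeriv_eq _ _ hXac).symm
      (Measure.withDensity_rnDeriv_eq _ _ hYac).symm hab,
    onePlusChiSq_withDensity (by fun_prop), onePlusChiSq_of_absolutelyContinuous hXac,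
    onePlusChiSq_of_absolutelyContinuous hYac]
  exact lintegral_sq_reflected_density_le hf hg hab
end

section
/- Let X, Y be independent random variables, X with density p, and a, b real with a² + b² = 1, a ≠ 0. Then 1 + χ²(aX + bY, Z) ≤ |a|^{-1} (1 + χ²(X,Z)) E e^{Y²/2}, where Z ~ N(0,1). -/
open MeasureTheory ProbabilityTheory Classical
open scoped ENNReal

/-! The law of `a X + b Y` has density `q t = |a|⁻¹ E p ((t - b Y) / a)`. Cauchy–Schwarz with
weight `φ ((t - b Y) / a)` bounds `q t ^ 2` by
`|a|⁻² E[(p² / φ) ((t - b Y) / a)] E[φ ((t - b Y) / a)]`, and since `t = a u + b y` forces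
`t² ≤ u² + y²`, we have `φ u ≤ φ t e^{y²/2}`. Dividing by `φ t` and integrating in `t`, the
substitution `u = (t - b y) / a` turns `∫ E[(p² / φ) ((t - b Y) / a)] dt` into
`|a| (1 + χ²(X, Z))`. -/

lemma lintegral_comp_sub_div {c : ℝ} (hc : c ≠ 0) (d : ℝ) {f : ℝ → ℝ≥0∞} (hf : Measurable f) :
    ∫⁻ t, f ((t - d) / c) = ENNReal.ofReal |c| * ∫⁻ x, f x := by
  have hmap : volume.map (fun t : ℝ => (t - d) / c) = ENNReal.ofReal |c| • volume := by
    have : (fun t : ℝ => (t - d) / c) = (c⁻¹ * ·) ∘ (· - d) := by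
      ext t; simp [div_eq_inv_mul]
    rw [this, ← Measure.map_map (by fun_prop) (by fun_prop), map_sub_right_eq_self,
      Real.map_volume_mul_left (inv_ne_zero hc), inv_inv]
  rw [← lintegral_map hf (by fun_prop), hmap, lintegral_smul_measure, smul_eq_mul]

lemma map_mul_add_withDensity {p : ℝ → ℝ≥0∞} (hp : Measurable p) {a : ℝ} (ha : a ≠ 0) (d : ℝ) :
    (volume.withDensity p).map (fun x => a * x + d)
      = volume.withDensity (fun t => ENNReal.ofReal |a|⁻¹ * p ((t - d) / a)) := by
  ext s hs
  have hg : Measurable fun x : ℝ => a * x + d := by fun_prop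
  have hinv (t : ℝ) : a * ((t - d) / a) + d = t := by field_simp; ring
  have hind (t : ℝ) : ((fun x => a * x + d) ⁻¹' s).indicator p ((t - d) / a)
      = s.indicator (fun t => p ((t - d) / a)) t := by
    simp only [Set.indicator, Set.mem_preimage, hinv]
  have hpa : Measurable fun t => p ((t - d) / a) := hp.comp (by fun_prop)
  rw [Measure.map_apply hg hs, withDensity_apply _ (hg hs), withDensity_apply _ hs,
    lintegral_const_mul _ hpa, ← lintegral_indicator hs, ← lintegral_congr hind,
    lintegral_comp_sub_div ha d (hp.indicator (hg hs)), lintegral_indicator (hg hs), ← mul_assoc,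
    ← ENNReal.ofReal_mul (by positivity), inv_mul_cancel₀ (abs_ne_zero.2 ha), ENNReal.ofReal_one,
    one_mul]

/-- The density of `a X + b Y` for `X` with Lebesgue density `p` and `Y` with law `ν`. -/
noncomputable def linCombDensity (p : ℝ → ℝ≥0∞) (ν : Measure ℝ) (a b t : ℝ) : ℝ≥0∞ :=
  ∫⁻ y, ENNReal.ofReal |a|⁻¹ * p ((t - b * y) / a) ∂ν

lemma measurable_linCombDensity {p : ℝ → ℝ≥0∞} (hp : Measurable p) (ν : Measure ℝ) [SFinite ν]
    (a b : ℝ) : Measurable (linCombDensity p ν a b) :=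
  Measurable.lintegral_prod_right (by fun_prop)

lemma map_linComb_prod_withDensity {p : ℝ → ℝ≥0∞} (hp : Measurable p) (ν : Measure ℝ) [SFinite ν]
    {a : ℝ} (ha : a ≠ 0) (b : ℝ) :
    ((volume.withDensity p).prod ν).map (fun z => a * z.1 + b * z.2)
      = volume.withDensity (linCombDensity p ν a b) := by
  ext s hs
  have hg : Measurable fun z : ℝ × ℝ => a * z.1 + b * z.2 := by fun_prop
  have hslice (y : ℝ) :
      volume.withDensity p ((fun x => (x, y)) ⁻¹' ((fun z => a * z.1 + b * z.2) ⁻¹' s))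
        = ∫⁻ t in s, ENNReal.ofReal |a|⁻¹ * p ((t - b * y) / a) := by
    rw [← withDensity_apply _ hs, ← map_mul_add_withDensity hp ha (b * y),
      Measure.map_apply (by fun_prop) hs]
    rfl
  rw [Measure.map_apply hg hs, Measure.prod_apply_symm (hg hs), withDensity_apply _ hs]
  simp_rw [hslice]
  exact lintegral_lintegral_swap (Measurable.aemeasurable (by fun_prop))

lemma ProbabilityTheory.IndepFun.map_linComb_eq_withDensity {Ω : Type*} [MeasurableSpace Ω]
    {P : Measure Ω} [IsFiniteMeasure P] {X Y : Ω → ℝ} (hX : Measurable X) (hY : Measurable Y)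
    (hindep : IndepFun X Y P) (hXac : P.map X ≪ volume) {a : ℝ} (ha : a ≠ 0) (b : ℝ) :
    P.map (fun ω => a * X ω + b * Y ω)
      = volume.withDensity (linCombDensity ((P.map X).rnDeriv volume) (P.map Y) a b) := by
  have hprod := (indepFun_iff_map_prod_eq_prod_map_map hX.aemeasurable hY.aemeasurable).mp hindep
  rw [← map_linComb_prod_withDensity (Measure.measurable_rnDeriv _ _) _ ha,
    Measure.withDensity_rnDeriv_eq _ _ hXac, ← hprod, Measure.map_map (by fun_prop) (hX.prodMk hY)]
  rfl

lemma sq_mul_add_mul_le {a b : ℝ} (hab : a ^ 2 + b ^ 2 = 1) (x y : ℝ) :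
    (a * x + b * y) ^ 2 ≤ x ^ 2 + y ^ 2 := by
  nlinarith [sq_nonneg (b * x - a * y)]

lemma gaussianPDF_le_mul_exp {a b : ℝ} (hab : a ^ 2 + b ^ 2 = 1) (u y : ℝ) :
    gaussianPDF 0 1 u
      ≤ gaussianPDF 0 1 (a * u + b * y) * ENNReal.ofReal (Real.exp (y ^ 2 / 2)) := by
  rw [gaussianPDF, gaussianPDF, ← ENNReal.ofReal_mul (gaussianPDFReal_nonneg _ _ _)]
  refine ENNReal.ofReal_le_ofReal ?_
  simp only [gaussianPDFReal, NNReal.coe_one, mul_one, sub_zero]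
  rw [mul_assoc, ← Real.exp_add]
  gcongr
  linarith [sq_mul_add_mul_le hab u y]

section CauchySchwarz

variable {α : Type*} [MeasurableSpace α] {μ : Measure α}

lemma lintegral_mul_sq_le {f g : α → ℝ≥0∞} (hf : AEMeasurable f μ) (hg : AEMeasurable g μ) :
    (∫⁻ x, f x * g x ∂μ) ^ 2 ≤ (∫⁻ x, f x ^ 2 ∂μ) * ∫⁻ x, g x ^ 2 ∂μ := by
  have h := ENNReal.lintegral_mul_le_Lp_mul_Lq μ Real.HolderConjugate.two_two hf hg
  simp only [Pi.mul_apply, ENNReal.rpow_two] at h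
  calc (∫⁻ x, f x * g x ∂μ) ^ 2
      ≤ ((∫⁻ x, f x ^ 2 ∂μ) ^ (1 / 2 : ℝ) * (∫⁻ x, g x ^ 2 ∂μ) ^ (1 / 2 : ℝ)) ^ 2 := by gcongr
    _ = (∫⁻ x, f x ^ 2 ∂μ) * ∫⁻ x, g x ^ 2 ∂μ := by
      rw [mul_pow, ← ENNReal.rpow_two, ← ENNReal.rpow_two, ← ENNReal.rpow_mul, ← ENNReal.rpow_mul]
      norm_num

lemma lintegral_sq_le_lintegral_sq_div_mul {f w : α → ℝ≥0∞} (hf : AEMeasurable f μ)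
    (hw : AEMeasurable w μ) (hw0 : ∀ x, w x ≠ 0) (hwt : ∀ x, w x ≠ ∞) :
    (∫⁻ x, f x ∂μ) ^ 2 ≤ (∫⁻ x, f x ^ 2 / w x ∂μ) * ∫⁻ x, w x ∂μ := by
  set s : α → ℝ≥0∞ := fun x => w x ^ (2⁻¹ : ℝ)
  have hs2 (x : α) : s x ^ 2 = w x := by
    rw [← ENNReal.rpow_two, ENNReal.rpow_inv_rpow two_ne_zero]
  have hs0 (x : α) : s x ≠ 0 := by simp [s, hw0 x]
  have hst (x : α) : s x ≠ ∞ := by simp [s, hwt x]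
  have hsm : AEMeasurable s μ := hw.pow_const _
  have hsq (x : α) : (f x / s x) ^ 2 = f x ^ 2 / w x := by
    rw [div_eq_mul_inv, mul_pow, ← ENNReal.inv_pow, hs2, div_eq_mul_inv]
  calc (∫⁻ x, f x ∂μ) ^ 2 = (∫⁻ x, f x / s x * s x ∂μ) ^ 2 := by
        simp_rw [ENNReal.div_mul_cancel (hs0 _) (hst _)]
    _ ≤ (∫⁻ x, (f x / s x) ^ 2 ∂μ) * ∫⁻ x, s x ^ 2 ∂μ := lintegral_mul_sq_le (hf.div hsm) hsm
    _ = (∫⁻ x, f x ^ 2 / w x ∂μ) * ∫⁻ x, w x ∂μ := by simp_rw [hsq, hs2]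

end CauchySchwarz

lemma onePlusChiSq_withDensity_s12 {q : ℝ → ℝ≥0∞} (hq : Measurable q) :
    onePlusChiSq (volume.withDensity q) = ∫⁻ x, q x ^ 2 / gaussianPDF 0 1 x := by
  set φ : ℝ → ℝ≥0∞ := gaussianPDF 0 1
  have hφm : Measurable φ := measurable_gaussianPDF 0 1
  have hφ0 (x : ℝ) : φ x ≠ 0 := (gaussianPDF_pos 0 one_ne_zero x).ne'
  have hφt (x : ℝ) : φ x ≠ ∞ := ENNReal.ofReal_ne_top
  have hγ : gaussianReal 0 1 = volume.withDensity φ := gaussianReal_of_var_ne_zero 0 one_ne_zero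
  have hratio : Measurable fun x => q x / φ x := hq.div hφm
  have hq_eq : volume.withDensity q = (gaussianReal 0 1).withDensity (fun x => q x / φ x) := by
    rw [hγ, ← withDensity_mul _ hφm hratio]
    congr 1 with x
    exact (ENNReal.mul_div_cancel (hφ0 x) (hφt x)).symm
  have hac : volume.withDensity q ≪ gaussianReal 0 1 := by
    rw [hq_eq]; exact withDensity_absolutelyContinuous _ _
  have hrn := Measure.rnDeriv_withDensity (gaussianReal 0 1) hratio
  rw [onePlusChiSq, if_pos hac, hq_eq, lintegral_congr_ae (hrn.mono fun x hx => by rw [hx]),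
    hγ, lintegral_withDensity_eq_lintegral_mul _ hφm (hratio.pow_const 2)]
  refine lintegral_congr fun x => ?_
  calc φ x * (q x / φ x) ^ 2 = φ x * (q x / φ x) * (q x / φ x) := by ring
    _ = q x ^ 2 / φ x := by rw [ENNReal.mul_div_cancel (hφ0 x) (hφt x), ← mul_div_assoc, sq]

lemma linCombDensity_sq_le {p : ℝ → ℝ≥0∞} (hp : Measurable p) (ν : Measure ℝ) {a b : ℝ}
    (hab : a ^ 2 + b ^ 2 = 1) (ha : a ≠ 0) (t : ℝ) :
    linCombDensity p ν a b t ^ 2 ≤ ENNReal.ofReal |a|⁻¹ ^ 2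
      * (∫⁻ y, p ((t - b * y) / a) ^ 2 / gaussianPDF 0 1 ((t - b * y) / a) ∂ν)
      * (gaussianPDF 0 1 t * ∫⁻ y, ENNReal.ofReal (Real.exp (y ^ 2 / 2)) ∂ν) := by
  have hu : Measurable fun y : ℝ => (t - b * y) / a := by fun_prop
  have hgauss : ∫⁻ y, gaussianPDF 0 1 ((t - b * y) / a) ∂ν
      ≤ gaussianPDF 0 1 t * ∫⁻ y, ENNReal.ofReal (Real.exp (y ^ 2 / 2)) ∂ν := by
    rw [← lintegral_const_mul _ (by fun_prop)]
    refine lintegral_mono fun y => ?_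
    have hinv : a * ((t - b * y) / a) + b * y = t := by field_simp; ring
    simpa only [hinv] using gaussianPDF_le_mul_exp hab ((t - b * y) / a) y
  have hpu : Measurable fun y => p ((t - b * y) / a) := hp.comp hu
  have hφu : Measurable fun y => gaussianPDF 0 1 ((t - b * y) / a) :=
    (measurable_gaussianPDF 0 1).comp hu
  have hCS := lintegral_sq_le_lintegral_sq_div_mul hpu.aemeasurable hφu.aemeasurable
    (fun y => (gaussianPDF_pos 0 one_ne_zero _).ne') (fun _ => ENNReal.ofReal_ne_top) (μ := ν)
  rw [linCombDensity, lintegral_const_mul _ hpu, mul_pow, mul_assoc]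
  gcongr
  exact hCS.trans (mul_le_mul_right hgauss _)

lemma lintegral_linCombDensity_sq_div_le {p : ℝ → ℝ≥0∞} (hp : Measurable p) (ν : Measure ℝ)
    [IsProbabilityMeasure ν] {a b : ℝ} (hab : a ^ 2 + b ^ 2 = 1) (ha : a ≠ 0) :
    ∫⁻ t, linCombDensity p ν a b t ^ 2 / gaussianPDF 0 1 t
      ≤ ENNReal.ofReal |a|⁻¹ * (∫⁻ x, p x ^ 2 / gaussianPDF 0 1 x)
        * ∫⁻ y, ENNReal.ofReal (Real.exp (y ^ 2 / 2)) ∂ν := by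
  set c := ENNReal.ofReal |a|⁻¹
  set E := ∫⁻ y, ENNReal.ofReal (Real.exp (y ^ 2 / 2)) ∂ν
  set g : ℝ → ℝ≥0∞ := fun x => p x ^ 2 / gaussianPDF 0 1 x
  have hg : Measurable g := (hp.pow_const 2).div (measurable_gaussianPDF 0 1)
  have hca : c * ENNReal.ofReal |a| = 1 := by
    rw [← ENNReal.ofReal_mul (by positivity), inv_mul_cancel₀ (abs_ne_zero.2 ha),
      ENNReal.ofReal_one]
  calc ∫⁻ t, linCombDensity p ν a b t ^ 2 / gaussianPDF 0 1 t
      ≤ ∫⁻ t, c ^ 2 * E * ∫⁻ y, g ((t - b * y) / a) ∂ν := by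
        refine lintegral_mono fun t => ?_
        rw [ENNReal.div_le_iff (gaussianPDF_pos 0 one_ne_zero t).ne' ENNReal.ofReal_ne_top]
        calc _ ≤ _ := linCombDensity_sq_le hp ν hab ha t
          _ = _ := by ring
    _ = c ^ 2 * E * ∫⁻ y, (∫⁻ t, g ((t - b * y) / a)) ∂ν := by
        rw [lintegral_const_mul _ (Measurable.lintegral_prod_right (by fun_prop)),
          lintegral_lintegral_swap (Measurable.aemeasurable (by fun_prop))]
    _ = c ^ 2 * E * (ENNReal.ofReal |a| * ∫⁻ x, g x) := by
        simp_rw [lintegral_comp_sub_div ha _ hg]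
        rw [lintegral_const, measure_univ, mul_one]
    _ = (c * ENNReal.ofReal |a|) * (c * (∫⁻ x, g x) * E) := by ring
    _ = c * (∫⁻ x, g x) * E := by rw [hca, one_mul]

/-- For independent `X, Y`, with `X` having a density, and `a² + b² = 1`, `a ≠ 0`:
`1 + χ²(aX + bY, Z) ≤ |a|⁻¹ (1 + χ²(X,Z)) · E e^{Y²/2}`. -/
theorem chiSq_perturbation_bound {Ω : Type*} [MeasureSpace Ω]
    [IsProbabilityMeasure (volume : Measure Ω)]
    (X Y : Ω → ℝ) (hX : Measurable X) (hY : Measurable Y)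
    (hindep : IndepFun X Y)
    (hXac : Measure.map X volume ≪ (volume : Measure ℝ))
    (a b : ℝ) (hab : a ^ 2 + b ^ 2 = 1) (ha : a ≠ 0) :
    onePlusChiSq (Measure.map (fun ω => a * X ω + b * Y ω) volume)
      ≤ ENNReal.ofReal |a|⁻¹ * onePlusChiSq (Measure.map X volume) *
          ∫⁻ ω, ENNReal.ofReal (Real.exp (Y ω ^ 2 / 2)) := by
  set p := (Measure.map X volume).rnDeriv (volume : Measure ℝ)
  have hp : Measurable p := Measure.measurable_rnDeriv _ _
  have hlawX : volume.withDensity p = Measure.map X volume :=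
    Measure.withDensity_rnDeriv_eq _ _ hXac
  have : IsProbabilityMeasure (Measure.map Y volume) :=
    Measure.isProbabilityMeasure_map hY.aemeasurable
  rw [hindep.map_linComb_eq_withDensity hX hY hXac ha b,
    onePlusChiSq_withDensity_s12 (measurable_linCombDensity hp _ a b), ← hlawX,
    onePlusChiSq_withDensity_s12 hp]
  exact (lintegral_linCombDensity_sq_div_le hp _ hab ha).trans_eq
    (by rw [lintegral_map (by fun_prop) hY])
end

section
/- Let X, X₁, X₂, ... be i.i.d. real random variables with characteristic function f extending to an entire function, Z_n = (X₁+...+X_n)/√n, and α > 1 with β = α/(α-1). If liminf_n (1/n) D_α(Z_n||Z) = 0, then E e^{-yX} = f(iy) ≤ e^{β y²/2} for all real y. -/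
/-!
For `ν ≪ γ = N(0,1)`, Hölder's inequality with exponents `α, β` against `γ` gives
`∫ e^{tz} dν ≤ (∫ (dν/dγ)^α dγ)^{1/α} (∫ e^{βtz} dγ)^{1/β} = e^{D_α(ν‖γ)/β} e^{βt²/2}`.
At `t = -y√n` and `ν` the law of `Z_n`, the left side is `(E e^{-yX})^n` by independence, so
`E e^{-yX} ≤ e^{D_α(Z_n‖Z)/(βn)} e^{βy²/2}`. Along a subsequence with `D_α(Z_n‖Z)/n → 0` the
right side tends to `e^{βy²/2}`.
-/

open MeasureTheory ProbabilityTheory Filter Classical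
open scoped ENNReal

/-- The Rényi divergence `D_α(ν || N(0,1))`, valued in `[0,∞]`: equal to
`(α-1)⁻¹ log ∫ (dν/dγ)^α dγ` when `ν ≪ γ = N(0,1)` and this integral is finite,
and `∞` otherwise. -/
noncomputable def renyiDiv (α : ℝ) (ν : Measure ℝ) : ℝ≥0∞ :=
  if ν ≪ gaussianReal 0 1 ∧ (∫⁻ x, (ν.rnDeriv (gaussianReal 0 1) x) ^ α ∂(gaussianReal 0 1)) ≠ ⊤
  then ENNReal.ofReal ((α - 1)⁻¹ *
    Real.log (∫⁻ x, (ν.rnDeriv (gaussianReal 0 1) x) ^ α ∂(gaussianReal 0 1)).toReal)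
  else ⊤

lemma lintegral_exp_mul_gaussianReal (μ : ℝ) (v : NNReal) (t : ℝ) :
    ∫⁻ x, ENNReal.ofReal (Real.exp (t * x)) ∂(gaussianReal μ v)
      = ENNReal.ofReal (Real.exp (μ * t + v * t ^ 2 / 2)) := by
  rw [← ofReal_integral_eq_lintegral_ofReal (integrable_exp_mul_gaussianReal t)
    (ae_of_all _ fun _ => (Real.exp_pos _).le), ← congrFun mgf_id_gaussianReal t]
  rfl

lemma lintegral_exp_mul_le_of_absolutelyContinuous_gaussianReal {α β : ℝ}
    (hαβ : α.HolderConjugate β) {ν : Measure ℝ} [SigmaFinite ν] (hν : ν ≪ gaussianReal 0 1)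
    (t : ℝ) :
    ∫⁻ x, ENNReal.ofReal (Real.exp (t * x)) ∂ν
      ≤ (∫⁻ x, ν.rnDeriv (gaussianReal 0 1) x ^ α ∂(gaussianReal 0 1)) ^ (1 / α)
        * ENNReal.ofReal (Real.exp (β * t ^ 2 / 2)) := by
  have hexp : Measurable fun x : ℝ => ENNReal.ofReal (Real.exp (t * x)) := by fun_prop
  have hpow : ∀ x : ℝ, ENNReal.ofReal (Real.exp (t * x)) ^ β
      = ENNReal.ofReal (Real.exp (β * t * x)) := fun x => by
    rw [ENNReal.ofReal_rpow_of_pos (Real.exp_pos _), ← Real.exp_mul]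
    ring_nf
  have hgauss : (∫⁻ x, ENNReal.ofReal (Real.exp (t * x)) ^ β ∂(gaussianReal 0 1)) ^ (1 / β)
      = ENNReal.ofReal (Real.exp (β * t ^ 2 / 2)) := by
    simp_rw [hpow, lintegral_exp_mul_gaussianReal]
    rw [ENNReal.ofReal_rpow_of_pos (Real.exp_pos _), ← Real.exp_mul]
    congr 2
    field_simp [hαβ.symm.ne_zero]
    push_cast
    ring
  rw [← lintegral_rnDeriv_mul hν hexp.aemeasurable, ← hgauss]
  exact ENNReal.lintegral_mul_le_Lp_mul_Lq _ hαβ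
    (Measure.measurable_rnDeriv ν _).aemeasurable hexp.aemeasurable

lemma lintegral_rnDeriv_rpow_le_exp_renyiDiv {α : ℝ} (hα : 1 < α) {ν : Measure ℝ}
    (h : renyiDiv α ν ≠ ⊤) :
    ν ≪ gaussianReal 0 1 ∧ ∫⁻ x, ν.rnDeriv (gaussianReal 0 1) x ^ α ∂(gaussianReal 0 1)
      ≤ ENNReal.ofReal (Real.exp ((α - 1) * (renyiDiv α ν).toReal)) := by
  set I := ∫⁻ x, ν.rnDeriv (gaussianReal 0 1) x ^ α ∂(gaussianReal 0 1)
  have hfin : ν ≪ gaussianReal 0 1 ∧ I ≠ ⊤ := by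
    by_contra hfin
    exact h (if_neg hfin)
  refine ⟨hfin.1, ?_⟩
  rw [renyiDiv, if_pos hfin, ENNReal.toReal_ofReal', ← ENNReal.ofReal_toReal hfin.2]
  refine ENNReal.ofReal_le_ofReal ?_
  rcases (ENNReal.toReal_nonneg (a := I)).eq_or_lt with hI | hI
  · exact hI ▸ (Real.exp_pos _).le
  rw [← Real.log_le_iff_le_exp hI, ← inv_mul_le_iff₀ (sub_pos.2 hα)]
  exact le_max_left _ _

lemma ProbabilityTheory.iIndepFun.lintegral_exp_mul_sum {Ω ι : Type*} [MeasurableSpace Ω]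
    {P : Measure Ω} {X : ι → Ω → ℝ} (hmeas : ∀ i, Measurable (X i)) (hindep : iIndepFun X P)
    {i₀ : ι} (hid : ∀ i, IdentDistrib (X i) (X i₀) P P) (S : Finset ι) (s : ℝ) :
    ∫⁻ ω, ENNReal.ofReal (Real.exp (s * ∑ i ∈ S, X i ω)) ∂P
      = (∫⁻ ω, ENNReal.ofReal (Real.exp (s * X i₀ ω)) ∂P) ^ S.card := by
  have hexp : Measurable fun x : ℝ => ENNReal.ofReal (Real.exp (s * x)) := by fun_prop
  have hfactor : ∀ ω, ENNReal.ofReal (Real.exp (s * ∑ i ∈ S, X i ω))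
      = ∏ i ∈ S, ENNReal.ofReal (Real.exp (s * X i ω)) := fun ω => by
    rw [Finset.mul_sum, Real.exp_sum, ENNReal.ofReal_prod_of_nonneg fun _ _ => (Real.exp_pos _).le]
  simp_rw [hfactor]
  rw [lintegral_prod_eq_prod_lintegral_of_indepFun S
      (fun i ω => ENNReal.ofReal (Real.exp (s * X i ω))) (hindep.comp _ fun _ => hexp)
      fun i => hexp.comp (hmeas i)]
  exact Finset.prod_eq_pow_card fun i _ => ((hid i).comp hexp).lintegral_eq

lemma lintegral_exp_mul_le_exp_renyiDiv {α β : ℝ} (hαβ : α.HolderConjugate β) {ν : Measure ℝ}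
    [SigmaFinite ν] (h : renyiDiv α ν ≠ ⊤) (t : ℝ) :
    ∫⁻ x, ENNReal.ofReal (Real.exp (t * x)) ∂ν
      ≤ ENNReal.ofReal (Real.exp ((renyiDiv α ν).toReal / β + β * t ^ 2 / 2)) := by
  obtain ⟨hν, hI⟩ := lintegral_rnDeriv_rpow_le_exp_renyiDiv hαβ.lt h
  calc _ ≤ _ := lintegral_exp_mul_le_of_absolutelyContinuous_gaussianReal hαβ hν t
    _ ≤ ENNReal.ofReal (Real.exp ((α - 1) * (renyiDiv α ν).toReal)) ^ (1 / α)
          * ENNReal.ofReal (Real.exp (β * t ^ 2 / 2)) := by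
      gcongr
      exact hαβ.one_div_nonneg
    _ = _ := by
      rw [ENNReal.ofReal_rpow_of_pos (Real.exp_pos _), ← Real.exp_mul,
        ← ENNReal.ofReal_mul (Real.exp_pos _).le, ← Real.exp_add, div_eq_mul_inv _ β,
        ← hαβ.one_sub_inv]
      field_simp [hαβ.ne_zero]

lemma lintegral_exp_mul_le_of_renyiDiv_map_sum_div_sqrt_le {Ω : Type*} [MeasurableSpace Ω]
    {P : Measure Ω} {α β : ℝ} (hαβ : α.HolderConjugate β) {X : ℕ → Ω → ℝ}
    (hmeas : ∀ i, Measurable (X i)) (hindep : iIndepFun X P)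
    (hid : ∀ i, IdentDistrib (X i) (X 0) P P) {n : ℕ} (hn : n ≠ 0) {ε : ℝ} (hε : 0 ≤ ε)
    (hD : renyiDiv α (P.map fun ω => (∑ i ∈ Finset.range n, X i ω) / Real.sqrt n)
      ≤ ENNReal.ofReal (ε * n)) (s : ℝ) :
    ∫⁻ ω, ENNReal.ofReal (Real.exp (s * X 0 ω)) ∂P
      ≤ ENNReal.ofReal (Real.exp (ε / β + β * s ^ 2 / 2)) := by
  have := hindep.isProbabilityMeasure
  have hsqrt : 0 < Real.sqrt n := Real.sqrt_pos.2 (by positivity)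
  have hZ : Measurable fun ω => (∑ i ∈ Finset.range n, X i ω) / Real.sqrt n :=
    (Finset.measurable_sum _ fun i _ => hmeas i).div_const _
  have hmgf : ∫⁻ z, ENNReal.ofReal (Real.exp (s * Real.sqrt n * z))
        ∂(P.map fun ω => (∑ i ∈ Finset.range n, X i ω) / Real.sqrt n)
      = (∫⁻ ω, ENNReal.ofReal (Real.exp (s * X 0 ω)) ∂P) ^ n := by
    have hsum := hindep.lintegral_exp_mul_sum hmeas hid (Finset.range n) s
    rw [Finset.card_range] at hsum
    rw [lintegral_map (by fun_prop) hZ, ← hsum]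
    simp_rw [mul_assoc, mul_div_cancel₀ _ hsqrt.ne']
  have hD_toReal : (renyiDiv α _).toReal ≤ ε * n :=
    ENNReal.toReal_le_of_le_ofReal (by positivity) hD
  have hβ := hαβ.symm.pos
  rw [← ENNReal.pow_le_pow_left_iff hn, ← hmgf, ← ENNReal.ofReal_pow (Real.exp_pos _).le,
    ← Real.exp_nat_mul]
  refine (lintegral_exp_mul_le_exp_renyiDiv hαβ
    (ne_top_of_le_ne_top ENNReal.ofReal_ne_top hD) _).trans ?_
  gcongr
  calc _ ≤ ε * n / β + β * (s ^ 2 * n) / 2 := by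
        rw [mul_pow, Real.sq_sqrt (Nat.cast_nonneg n)]
        gcongr
    _ = _ := by ring

lemma exists_le_ofReal_mul_of_liminf_div_eq_zero {u : ℕ → ℝ≥0∞}
    (h : liminf (fun n => u n / n) atTop = 0) {ε : ℝ} (hε : 0 < ε) :
    ∃ n ≠ 0, u n ≤ ENNReal.ofReal (ε * n) := by
  have hlt : liminf (fun n => u n / n) atTop < ENNReal.ofReal ε := h ▸ ENNReal.ofReal_pos.2 hε
  obtain ⟨n, hn_lt, hn⟩ :=
    ((frequently_lt_of_liminf_lt (by isBoundedDefault) hlt).and_eventually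
      (eventually_ne_atTop 0)).exists
  refine ⟨n, hn, ?_⟩
  rw [ENNReal.div_lt_iff (Or.inl (Nat.cast_ne_zero.2 hn)) (Or.inl (ENNReal.natCast_ne_top n))]
    at hn_lt
  rw [ENNReal.ofReal_mul hε.le, ENNReal.ofReal_natCast]
  exact hn_lt.le

theorem subgaussian_of_liminf_renyi_general {Ω : Type*} [MeasureSpace Ω]
    (α β : ℝ) (hα : 1 < α) (hβ : β = α / (α - 1))
    (X : ℕ → Ω → ℝ) (hmeas : ∀ i, Measurable (X i))
    (hindep : iIndepFun X)
    (hid : ∀ i, IdentDistrib (X i) (X 0))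
    (hliminf : liminf (fun n : ℕ =>
        renyiDiv α (Measure.map
          (fun ω => (∑ i ∈ Finset.range n, X i ω) / Real.sqrt n) volume) / (n : ℝ≥0∞))
      atTop = 0) :
    ∀ y : ℝ, (∫⁻ ω, ENNReal.ofReal (Real.exp (-y * X 0 ω)))
      ≤ ENNReal.ofReal (Real.exp (β * y ^ 2 / 2)) := by
  have hαβ : α.HolderConjugate β := (Real.holderConjugate_iff_eq_conjExponent hα).2 hβ
  intro y
  have hbound : ∀ ε > 0, (∫⁻ ω, ENNReal.ofReal (Real.exp (-y * X 0 ω)))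
      ≤ ENNReal.ofReal (Real.exp (ε / β + β * y ^ 2 / 2)) := fun ε hε => by
    obtain ⟨n, hn, hD⟩ := exists_le_ofReal_mul_of_liminf_div_eq_zero hliminf hε
    simpa using lintegral_exp_mul_le_of_renyiDiv_map_sum_div_sqrt_le hαβ hmeas hindep hid hn hε.le
      hD (-y)
  have hlim : Tendsto (fun ε : ℝ => ENNReal.ofReal (Real.exp (ε / β + β * y ^ 2 / 2)))
      (nhdsWithin 0 (Set.Ioi 0)) (nhds (ENNReal.ofReal (Real.exp (β * y ^ 2 / 2)))) := by
    have hcont : Continuous fun ε : ℝ => ENNReal.ofReal (Real.exp (ε / β + β * y ^ 2 / 2)) :=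
      ENNReal.continuous_ofReal.comp (by fun_prop)
    simpa using (hcont.tendsto 0).mono_left nhdsWithin_le_nhds
  exact ge_of_tendsto hlim (eventually_nhdsWithin_of_forall hbound)

/-- If `X, X₁, X₂, …` are i.i.d., the MGF of `X` is everywhere finite (so that the
characteristic function extends to an entire function), and
`liminf_n (1/n) D_α(Z_n || Z) = 0` for `Z_n = (X₁ + ⋯ + X_n)/√n`, then
`E e^{-yX} ≤ e^{β y²/2}` for all real `y`, where `β = α/(α-1)`. -/
theorem subgaussian_of_liminf_renyi {Ω : Type*} [MeasureSpace Ω]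
    [IsProbabilityMeasure (volume : Measure Ω)]
    (α β : ℝ) (hα : 1 < α) (hβ : β = α / (α - 1))
    (X : ℕ → Ω → ℝ) (hmeas : ∀ i, Measurable (X i))
    (hindep : iIndepFun X)
    (hid : ∀ i, IdentDistrib (X i) (X 0))
    (hentire : ∀ t : ℝ, (∫⁻ ω, ENNReal.ofReal (Real.exp (t * X 0 ω))) ≠ ⊤)
    (hliminf : liminf (fun n : ℕ =>
        renyiDiv α (Measure.map
          (fun ω => (∑ i ∈ Finset.range n, X i ω) / Real.sqrt n) volume) / (n : ℝ≥0∞))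
      atTop = 0) :
    ∀ y : ℝ, (∫⁻ ω, ENNReal.ofReal (Real.exp (-y * X 0 ω)))
      ≤ ENNReal.ofReal (Real.exp (β * y ^ 2 / 2)) :=
  subgaussian_of_liminf_renyi_general α β hα hβ X hmeas hindep hid hliminf
end

section
/- Let ψ : ℝ → ℝ be real-analytic with 0 < ψ(u) ≤ 1 for all u, and suppose ψ(u₀) = 1 for some u₀ > 0. Then there exist m ≥ 1, r₀ ∈ (0, u₀), and c₀ > 0 such that ψ(u) ≥ e^{-c₀ (u-u₀)^{2m}} for |u - u₀| ≤ r₀; consequently ∫_{|u|>u₀-r₀} ψ(u)^{2n} du ≥ c n^{-1/(2m)} for some c > 0 and all large n. -/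
/-!
Since `u₀` is an interior maximum of the analytic function `ψ`, the power series of `ψ` at `u₀`
has no linear term, so `1 - ψ u = O((u - u₀)²)`; as `1 - x ≥ e^{-2x}` for `0 ≤ x ≤ 1/2`, this
gives `ψ u ≥ e^{-c₀ (u - u₀)²}` near `u₀`, i.e. `m = 1` works. On the interval of radius
`t = n^{-1/(2m)}` around `u₀` such a bound makes `ψ^{2n} ≥ e^{-2c₀}`, so the integral is at
least `2 e^{-2c₀} t`.
-/

open MeasureTheory Filter Topology Asymptotics Set

theorem AnalyticAt.isBigO_sub_sq_of_isLocalMin {f : ℝ → ℝ} {x₀ : ℝ}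
    (hf : AnalyticAt ℝ f x₀) (hmin : IsLocalMin f x₀) :
    (fun x => f x - f x₀) =O[𝓝 x₀] fun x => (x - x₀) ^ 2 := by
  obtain ⟨p, hp⟩ := hf
  have hcoeff : p.coeff 1 = 0 := hp.deriv.symm.trans hmin.deriv_eq_zero
  have hpartialSum (y : ℝ) : p.partialSum 2 y = f x₀ := by
    rw [FormalMultilinearSeries.partialSum, Finset.sum_range_succ, Finset.sum_range_one,
      hp.coeff_zero, FormalMultilinearSeries.apply_eq_pow_smul_coeff, hcoeff, smul_zero,
      add_zero]
  have h := (hp.isBigO_sub_partialSum_pow 2).comp_tendsto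
    (tendsto_sub_nhds_zero_iff.2 (tendsto_id (x := 𝓝 x₀)))
  simpa [Function.comp_def, hpartialSum, Real.norm_eq_abs] using h

theorem Real.exp_neg_two_mul_le_one_sub {x : ℝ} (hx₀ : 0 ≤ x) (hx : x ≤ 1 / 2) :
    Real.exp (-(2 * x)) ≤ 1 - x := by
  rw [Real.exp_neg, inv_le_iff_one_le_mul₀ (Real.exp_pos _)]
  nlinarith [Real.add_one_le_exp (2 * x)]

theorem AnalyticAt.exists_exp_neg_mul_sq_le_of_isLocalMax {ψ : ℝ → ℝ} {u₀ : ℝ}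
    (hψ : AnalyticAt ℝ ψ u₀) (hmax : IsLocalMax ψ u₀) (hψu₀ : ψ u₀ = 1) :
    ∃ c₀ > 0, ∀ᶠ u in 𝓝 u₀, Real.exp (-c₀ * (u - u₀) ^ 2) ≤ ψ u := by
  obtain ⟨C, hC, hbound⟩ := (hψ.neg.isBigO_sub_sq_of_isLocalMin hmax.neg).exists_pos
  have hsmall : ∀ᶠ u in 𝓝 u₀, C * (u - u₀) ^ 2 ≤ 1 / 2 := by
    have : Tendsto (fun u => C * (u - u₀) ^ 2) (𝓝 u₀) (𝓝 0) :=
      Continuous.tendsto' (by fun_prop) _ _ (by simp)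
    exact this.eventually (eventually_le_nhds (by norm_num))
  refine ⟨2 * C, by positivity, ?_⟩
  filter_upwards [hbound.bound, hsmall] with u hu hsmall_u
  rw [Pi.neg_apply, Pi.neg_apply, hψu₀, Real.norm_eq_abs, Real.norm_eq_abs,
    abs_of_nonneg (sq_nonneg (u - u₀))] at hu
  calc Real.exp (-(2 * C) * (u - u₀) ^ 2) = Real.exp (-(2 * (C * (u - u₀) ^ 2))) := by ring_nf
    _ ≤ 1 - C * (u - u₀) ^ 2 :=
        Real.exp_neg_two_mul_le_one_sub (by positivity) hsmall_u
    _ ≤ ψ u := by linarith [le_abs_self (-ψ u - -1)]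

theorem exists_abs_sub_le_of_eventually_nhds {P : ℝ → Prop} {x₀ a : ℝ} (ha : 0 < a)
    (h : ∀ᶠ x in 𝓝 x₀, P x) : ∃ r, 0 < r ∧ r < a ∧ ∀ x, |x - x₀| ≤ r → P x := by
  obtain ⟨ε, hε, hball⟩ := Metric.eventually_nhds_iff.1 h
  refine ⟨min (ε / 2) (a / 2), by positivity, (min_le_right _ _).trans_lt (half_lt_self ha),
    fun x hx => hball ?_⟩
  rw [Real.dist_eq]
  exact hx.trans_lt ((min_le_left _ _).trans_lt (half_lt_self hε))

theorem Real.rpow_neg_one_div_pow_mul_self {x : ℝ} (hx : 0 < x) {k : ℕ} (hk : k ≠ 0) :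
    (x ^ (-(1 / (k : ℝ)))) ^ k * x = 1 := by
  rw [← Real.rpow_natCast, ← Real.rpow_mul hx.le, neg_mul,
    one_div_mul_cancel (by exact_mod_cast hk), Real.rpow_neg_one, inv_mul_cancel₀ hx.ne']

theorem Real.exp_neg_two_mul_le_pow_of_exp_neg_mul_pow_le {c₀ t y x : ℝ} {m n : ℕ}
    (hc₀ : 0 ≤ c₀) (ht : t ^ (2 * m) * n = 1) (hy : |y| ≤ t)
    (hx : Real.exp (-c₀ * y ^ (2 * m)) ≤ x) :
    Real.exp (-2 * c₀) ≤ x ^ (2 * n) := by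
  have hpow : y ^ (2 * m) ≤ t ^ (2 * m) := by
    rw [← (even_two_mul m).pow_abs]
    exact pow_le_pow_left₀ (abs_nonneg _) hy _
  calc Real.exp (-2 * c₀) = Real.exp (-c₀ * t ^ (2 * m)) ^ (2 * n) := by
        rw [← Real.exp_nat_mul]
        congr 1
        push_cast
        linear_combination 2 * c₀ * ht
    _ ≤ Real.exp (-c₀ * y ^ (2 * m)) ^ (2 * n) :=
        pow_le_pow_left₀ (Real.exp_nonneg _)
          (Real.exp_le_exp.2 (mul_le_mul_of_nonpos_left hpow (neg_nonpos.2 hc₀))) _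
    _ ≤ x ^ (2 * n) := pow_le_pow_left₀ (Real.exp_nonneg _) hx _

theorem eventually_ofReal_mul_rpow_le_setLIntegral_pow {ψ : ℝ → ℝ} {u₀ r₀ c₀ : ℝ} {m : ℕ}
    (hm : 0 < m) (hr₀ : 0 < r₀) (hc₀ : 0 ≤ c₀)
    (hbd : ∀ u, |u - u₀| ≤ r₀ → Real.exp (-c₀ * (u - u₀) ^ (2 * m)) ≤ ψ u) :
    ∀ᶠ n : ℕ in atTop,
      ENNReal.ofReal (2 * Real.exp (-2 * c₀) * (n : ℝ) ^ (-(1 / (2 * (m : ℝ)))))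
        ≤ ∫⁻ u in Ioo (u₀ - r₀) (u₀ + r₀), ENNReal.ofReal (ψ u ^ (2 * n)) := by
  have htendsto : Tendsto (fun n : ℕ => (n : ℝ) ^ (-(1 / (2 * (m : ℝ))))) atTop (𝓝 0) :=
    (tendsto_rpow_neg_atTop (by positivity)).comp tendsto_natCast_atTop_atTop
  filter_upwards [htendsto.eventually (eventually_le_nhds hr₀), eventually_gt_atTop 0]
    with n htr hn
  set t := (n : ℝ) ^ (-(1 / (2 * (m : ℝ))))
  have ht : t ^ (2 * m) * n = 1 := by
    simpa [t] using Real.rpow_neg_one_div_pow_mul_self (x := n) (by positivity) (k := 2 * m)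
      (by positivity)
  have hlower (u : ℝ) (hu : u ∈ Ioo (u₀ - t) (u₀ + t)) :
      ENNReal.ofReal (Real.exp (-2 * c₀)) ≤ ENNReal.ofReal (ψ u ^ (2 * n)) := by
    have hut : |u - u₀| ≤ t := abs_sub_le_iff.2 ⟨by linarith [hu.2], by linarith [hu.1]⟩
    exact ENNReal.ofReal_le_ofReal <|
      Real.exp_neg_two_mul_le_pow_of_exp_neg_mul_pow_le hc₀ ht hut (hbd u (hut.trans htr))
  calc ENNReal.ofReal (2 * Real.exp (-2 * c₀) * t)
      = ∫⁻ _ in Ioo (u₀ - t) (u₀ + t), ENNReal.ofReal (Real.exp (-2 * c₀)) := by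
        rw [setLIntegral_const, Real.volume_Ioo, ← ENNReal.ofReal_mul (by positivity)]
        ring_nf
    _ ≤ ∫⁻ u in Ioo (u₀ - t) (u₀ + t), ENNReal.ofReal (ψ u ^ (2 * n)) :=
        setLIntegral_mono' measurableSet_Ioo hlower
    _ ≤ ∫⁻ u in Ioo (u₀ - r₀) (u₀ + r₀), ENNReal.ofReal (ψ u ^ (2 * n)) :=
        lintegral_mono_set (Ioo_subset_Ioo (by linarith) (by linarith))

theorem analytic_max_point_lower_bound_general (ψ : ℝ → ℝ)
    (hana : ∀ x : ℝ, AnalyticAt ℝ ψ x)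
    (hle : ∀ u, ψ u ≤ 1)
    (u₀ : ℝ) (hu₀ : 0 < u₀) (hmax : ψ u₀ = 1) :
    ∃ m : ℕ, 1 ≤ m ∧ ∃ r₀ : ℝ, 0 < r₀ ∧ r₀ < u₀ ∧
      (∃ c₀ : ℝ, 0 < c₀ ∧ ∀ u : ℝ, |u - u₀| ≤ r₀ →
        Real.exp (-c₀ * (u - u₀) ^ (2 * m)) ≤ ψ u) ∧
      ∃ c : ℝ, 0 < c ∧ ∃ N : ℕ, ∀ n : ℕ, N ≤ n →
        ENNReal.ofReal (c * (n : ℝ) ^ (-(1 / (2 * (m : ℝ)))))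
          ≤ ∫⁻ u in {u : ℝ | u₀ - r₀ < |u|}, ENNReal.ofReal (ψ u ^ (2 * n)) := by
  have hlocalMax : IsLocalMax ψ u₀ := Eventually.of_forall fun u => hmax ▸ hle u
  obtain ⟨c₀, hc₀, hnear⟩ :=
    (hana u₀).exists_exp_neg_mul_sq_le_of_isLocalMax hlocalMax hmax
  obtain ⟨r₀, hr₀, hr₀u₀, hbd⟩ := exists_abs_sub_le_of_eventually_nhds hu₀ hnear
  obtain ⟨N, hN⟩ := eventually_atTop.1 <|
    eventually_ofReal_mul_rpow_le_setLIntegral_pow (m := 1) one_pos hr₀ hc₀.le hbd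
  have hsub : Ioo (u₀ - r₀) (u₀ + r₀) ⊆ {u : ℝ | u₀ - r₀ < |u|} :=
    fun u hu => hu.1.trans_le (le_abs_self u)
  exact ⟨1, le_rfl, r₀, hr₀, hr₀u₀, ⟨c₀, hc₀, hbd⟩, _, by positivity, N,
    fun n hn => (hN n hn).trans (lintegral_mono_set hsub)⟩

/-- If `ψ : ℝ → ℝ` is real-analytic with `0 < ψ ≤ 1` and `ψ(u₀) = 1` at some `u₀ > 0`,
then there are `m ≥ 1`, `0 < r₀ < u₀` and `c₀ > 0` with
`ψ(u) ≥ e^{-c₀ (u-u₀)^{2m}}` for `|u - u₀| ≤ r₀`; consequently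
`∫_{|u| > u₀ - r₀} ψ(u)^{2n} du ≥ c n^{-1/(2m)}` for some `c > 0` and all large `n`. -/
theorem analytic_max_point_lower_bound (ψ : ℝ → ℝ)
    (hana : ∀ x : ℝ, AnalyticAt ℝ ψ x)
    (hpos : ∀ u, 0 < ψ u) (hle : ∀ u, ψ u ≤ 1)
    (u₀ : ℝ) (hu₀ : 0 < u₀) (hmax : ψ u₀ = 1) :
    ∃ m : ℕ, 1 ≤ m ∧ ∃ r₀ : ℝ, 0 < r₀ ∧ r₀ < u₀ ∧
      (∃ c₀ : ℝ, 0 < c₀ ∧ ∀ u : ℝ, |u - u₀| ≤ r₀ →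
        Real.exp (-c₀ * (u - u₀) ^ (2 * m)) ≤ ψ u) ∧
      ∃ c : ℝ, 0 < c ∧ ∃ N : ℕ, ∀ n : ℕ, N ≤ n →
        ENNReal.ofReal (c * (n : ℝ) ^ (-(1 / (2 * (m : ℝ)))))
          ≤ ∫⁻ u in {u : ℝ | u₀ - r₀ < |u|}, ENNReal.ofReal (ψ u ^ (2 * n)) :=
  analytic_max_point_lower_bound_general ψ hana hle u₀ hu₀ hmax
end

section
/- For all real y ≠ 0, sinh(y√3)/(y√3) < e^{y²/2}. Equivalently, if X is uniform on [-√3, √3] then E e^{yX} < e^{y²} for all y ≠ 0. -/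
/-!
Compare power series: `sinh t / t = ∑ t^(2n) / (2n+1)!` and `exp (t²/6) = ∑ t^(2n) / (6^n n!)`.
Since `6^n n! ≤ (2n+1)!`, with strict inequality from `n = 2` on, the comparison is strict for
`t ≠ 0`. With `t = y√3` this is the first claim, and the second is the same quantity, computed as an
integral, bounded further by `exp (y²/2) ≤ exp (y²)`.
-/

open MeasureTheory
open scoped Nat

theorem Nat.six_pow_mul_factorial_le_factorial_two_mul_add_one (n : ℕ) :
    6 ^ n * n ! ≤ (2 * n + 1)! := by
  induction n with
  | zero => simp
  | succ n ih =>
    rw [show 2 * (n + 1) + 1 = 2 * n + 1 + 1 + 1 by ring, Nat.factorial_succ (2 * n + 1 + 1),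
      Nat.factorial_succ (2 * n + 1), Nat.factorial_succ n, pow_succ]
    calc 6 ^ n * 6 * ((n + 1) * n !) = (6 * (n + 1)) * (6 ^ n * n !) := by ring
      _ ≤ ((2 * n + 1 + 1 + 1) * (2 * n + 1 + 1)) * (2 * n + 1)! :=
        Nat.mul_le_mul (by nlinarith) ih
      _ = _ := by ring

namespace Real

theorem hasSum_sinh_div_self {t : ℝ} (ht : t ≠ 0) :
    HasSum (fun n : ℕ ↦ t ^ (2 * n) / (2 * n + 1)!) (sinh t / t) := by
  have hterm : (fun n : ℕ ↦ t ^ (2 * n) / (2 * n + 1)!) =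
      fun n : ℕ ↦ t ^ (2 * n + 1) / (2 * n + 1)! / t := by
    funext n
    rw [pow_succ, div_right_comm, mul_div_cancel_right₀ _ ht]
  rw [hterm]
  exact (hasSum_sinh t).div_const t

theorem hasSum_exp_sq_div_six (t : ℝ) :
    HasSum (fun n : ℕ ↦ t ^ (2 * n) / (6 ^ n * n !)) (exp (t ^ 2 / 6)) := by
  have hterm : (fun n : ℕ ↦ t ^ (2 * n) / (6 ^ n * n !)) = fun n : ℕ ↦ (t ^ 2 / 6) ^ n / n ! := by
    funext n
    rw [div_pow, pow_mul, div_div]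
  rw [hterm, exp_eq_exp_ℝ]
  exact NormedSpace.expSeries_div_hasSum_exp (t ^ 2 / 6)

theorem sinh_div_self_lt_exp_sq_div_six {t : ℝ} (ht : t ≠ 0) : sinh t / t < exp (t ^ 2 / 6) := by
  refine hasSum_lt (i := 2) (fun n ↦ ?_) ?_ (hasSum_sinh_div_self ht) (hasSum_exp_sq_div_six t)
  · have hfac : ((6 ^ n * n ! : ℕ) : ℝ) ≤ (2 * n + 1)! :=
      mod_cast Nat.six_pow_mul_factorial_le_factorial_two_mul_add_one n
    push_cast at hfac
    gcongr
    exact (even_two_mul n).pow_nonneg t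
  · have : 0 < t ^ 4 := by positivity
    norm_num [Nat.factorial]
    linarith

end Real

theorem integral_Icc_neg_exp_mul {a : ℝ} (ha : 0 ≤ a) {y : ℝ} (hy : y ≠ 0) :
    ∫ x in Set.Icc (-a) a, Real.exp (y * x) = 2 * Real.sinh (y * a) / y := by
  rw [integral_Icc_eq_integral_Ioc, ← intervalIntegral.integral_of_le (by linarith),
    intervalIntegral.integral_comp_mul_left (fun x ↦ Real.exp x) hy, integral_exp, smul_eq_mul,
    Real.sinh_eq, mul_neg]
  field_simp

/-- For all `y ≠ 0`, `sinh(y√3)/(y√3) < e^{y²/2}`; equivalently, if `X` is uniform on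
`[-√3, √3]` then `E e^{yX} < e^{y²}` for all `y ≠ 0`. -/
theorem uniform_strict_subgaussian :
    ∀ y : ℝ, y ≠ 0 →
      Real.sinh (y * Real.sqrt 3) / (y * Real.sqrt 3) < Real.exp (y ^ 2 / 2) ∧
      (2 * Real.sqrt 3)⁻¹ *
          (∫ x in Set.Icc (-Real.sqrt 3) (Real.sqrt 3), Real.exp (y * x))
        < Real.exp (y ^ 2) := by
  intro y hy
  have hsqrt : 0 < Real.sqrt 3 := by positivity
  have hbound : Real.sinh (y * Real.sqrt 3) / (y * Real.sqrt 3) < Real.exp (y ^ 2 / 2) := by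
    have hsq : (y * Real.sqrt 3) ^ 2 / 6 = y ^ 2 / 2 := by
      rw [mul_pow, Real.sq_sqrt (by norm_num)]
      ring
    simpa only [hsq] using Real.sinh_div_self_lt_exp_sq_div_six (mul_ne_zero hy hsqrt.ne')
  refine ⟨hbound, ?_⟩
  have hmean : (2 * Real.sqrt 3)⁻¹ *
      (∫ x in Set.Icc (-Real.sqrt 3) (Real.sqrt 3), Real.exp (y * x))
        = Real.sinh (y * Real.sqrt 3) / (y * Real.sqrt 3) := by
    rw [integral_Icc_neg_exp_mul hsqrt.le hy]
    field_simp
  rw [hmean]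
  exact hbound.trans_le (Real.exp_le_exp.2 (by nlinarith [sq_nonneg y]))
end

section
/- Let ξ be independent of Z ~ N(0,1), ξ ≥ 0 with E ξ = 1, and X = √ξ · Z. Then E X = 0, E X² = 1, and E e^{tX} = E e^{ξ t²/2} for all real t. Moreover, E e^{tX} < e^{t²} for all t ≠ 0 if and only if P(ξ ≤ 2) = 1 and P(ξ = 2) < 1. -/
/-! Conditionally on `ξ`, `X = √ξ Z` is a centred Gaussian of variance `ξ`, so
`E e^{tX} = E e^{ξ t²/2}`, and with `s = t²/2` the sub-Gaussian bound reads `E e^{sξ} < e^{2s}`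
for all `s > 0`. If `ξ ≤ 2` a.s. then `E e^{sξ} ≤ e^{2s}`, with equality only when `ξ = 2` a.s.;
conversely the Chernoff bound `P(ξ ≥ 2 + ε) ≤ e^{-sε}`, valid for every `s > 0`, forces
`ξ ≤ 2` a.s. -/

open MeasureTheory ProbabilityTheory Real Filter Topology
open scoped NNReal ENNReal

namespace ProbabilityTheory

variable {Ω : Type*} {mΩ : MeasurableSpace Ω} {P : Measure Ω}

section GaussianScaleMixture

lemma lintegral_ofReal_exp_mul_gaussianReal (μ : ℝ) (v : ℝ≥0) (s : ℝ) :
    ∫⁻ x, ENNReal.ofReal (rexp (s * x)) ∂gaussianReal μ v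
      = ENNReal.ofReal (rexp (μ * s + v * s ^ 2 / 2)) := by
  rw [← ofReal_integral_eq_lintegral_ofReal (integrable_exp_mul_gaussianReal s)
    (ae_of_all _ fun x => (exp_pos _).le)]
  exact congrArg (fun f => ENNReal.ofReal (f s)) mgf_fun_id_gaussianReal

lemma integral_sq_gaussianReal_zero (v : ℝ≥0) : ∫ x, x ^ 2 ∂gaussianReal 0 v = v := by
  rw [← variance_of_integral_eq_zero aemeasurable_id' integral_id_gaussianReal,
    variance_fun_id_gaussianReal]

variable {σ Z : Ω → ℝ} {v : ℝ≥0}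

lemma integral_mul_eq_zero_of_indepFun_gaussianReal (hσ : AEMeasurable σ P)
    (hZ : HasLaw Z (gaussianReal 0 v) P) (hσZ : IndepFun σ Z P) :
    ∫ ω, σ ω * Z ω ∂P = 0 := by
  rw [← Pi.mul_def, hσZ.integral_mul_eq_mul_integral hσ.aestronglyMeasurable
    hZ.aemeasurable.aestronglyMeasurable, hZ.integral_eq, integral_id_gaussianReal, mul_zero]

lemma integral_mul_sq_of_indepFun_gaussianReal (hσ : AEMeasurable σ P)
    (hZ : HasLaw Z (gaussianReal 0 v) P) (hσZ : IndepFun σ Z P) :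
    ∫ ω, (σ ω * Z ω) ^ 2 ∂P = v * ∫ ω, σ ω ^ 2 ∂P := by
  have hsq : IndepFun (fun ω => σ ω ^ 2) (fun ω => Z ω ^ 2) P :=
    hσZ.comp (measurable_id.pow_const 2) (measurable_id.pow_const 2)
  simp_rw [mul_pow]
  rw [← Pi.mul_def, hsq.integral_mul_eq_mul_integral (hσ.pow_const 2).aestronglyMeasurable
    (hZ.aemeasurable.pow_const 2).aestronglyMeasurable]
  have hZsq : ∫ ω, Z ω ^ 2 ∂P = v := by
    rw [← integral_sq_gaussianReal_zero v]
    exact hZ.integral_comp (f := fun x => x ^ 2) (by fun_prop)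
  rw [hZsq, mul_comm]

lemma lintegral_exp_mul_mul_of_indepFun_gaussianReal [IsFiniteMeasure P] (hσ : AEMeasurable σ P)
    (hZ : HasLaw Z (gaussianReal 0 v) P) (hσZ : IndepFun σ Z P) (t : ℝ) :
    ∫⁻ ω, ENNReal.ofReal (rexp (t * (σ ω * Z ω))) ∂P
      = ∫⁻ ω, ENNReal.ofReal (rexp (v * (t * σ ω) ^ 2 / 2)) ∂P := by
  have hpair : P.map (fun ω => (σ ω, Z ω)) = (P.map σ).prod (gaussianReal 0 v) := by
    rw [← hZ.map_eq]
    exact hσZ.map_prod_eq_prod_map_map hσ hZ.aemeasurable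
  calc ∫⁻ ω, ENNReal.ofReal (rexp (t * (σ ω * Z ω))) ∂P
      = ∫⁻ p, ENNReal.ofReal (rexp (t * (p.1 * p.2))) ∂P.map fun ω => (σ ω, Z ω) := by
        rw [lintegral_map' (by fun_prop) (hσ.prodMk hZ.aemeasurable)]
    _ = ∫⁻ x, ∫⁻ z, ENNReal.ofReal (rexp (t * x * z)) ∂gaussianReal 0 v ∂P.map σ := by
        rw [hpair, lintegral_prod _ (by fun_prop)]
        simp only [mul_assoc]
    _ = ∫⁻ x, ENNReal.ofReal (rexp (v * (t * x) ^ 2 / 2)) ∂P.map σ := by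
        simp only [lintegral_ofReal_exp_mul_gaussianReal, zero_mul, zero_add]
    _ = ∫⁻ ω, ENNReal.ofReal (rexp (v * (t * σ ω) ^ 2 / 2)) ∂P :=
        lintegral_map' (by fun_prop) hσ

end GaussianScaleMixture

section ExponentialMoments

variable {X : Ω → ℝ} {c : ℝ}

lemma measure_add_le_eq_zero_of_lintegral_exp_mul_le (hX : AEMeasurable X P)
    (h : ∀ s > 0, ∫⁻ ω, ENNReal.ofReal (rexp (s * X ω)) ∂P ≤ ENNReal.ofReal (rexp (s * c)))
    {ε : ℝ} (hε : 0 < ε) : P {ω | c + ε ≤ X ω} = 0 := by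
  have chernoff : ∀ s > 0, P {ω | c + ε ≤ X ω} ≤ ENNReal.ofReal (rexp (-(s * ε))) := by
    intro s hs
    set a := ENNReal.ofReal (rexp (s * (c + ε)))
    have markov := mul_meas_ge_le_lintegral₀ (by fun_prop) a
      (μ := P) (f := fun ω => ENNReal.ofReal (rexp (s * X ω)))
    have hsub : {ω | c + ε ≤ X ω} ⊆ {ω | a ≤ ENNReal.ofReal (rexp (s * X ω))} := fun ω hω =>
      ENNReal.ofReal_le_ofReal (exp_le_exp.2 (mul_le_mul_of_nonneg_left hω hs.le))
    have hc : ENNReal.ofReal (rexp (s * c)) = a * ENNReal.ofReal (rexp (-(s * ε))) := by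
      rw [← ENNReal.ofReal_mul (exp_pos _).le, ← exp_add]
      ring_nf
    rw [← ENNReal.mul_le_mul_iff_right (a := a) (by positivity) ENNReal.ofReal_ne_top, ← hc]
    exact (mul_le_mul_right (measure_mono hsub) a).trans (markov.trans (h s hs))
  have hlim : Tendsto (fun s : ℝ => ENNReal.ofReal (rexp (-(s * ε)))) atTop (𝓝 0) := by
    simpa using ENNReal.tendsto_ofReal
      (tendsto_exp_neg_atTop_nhds_zero.comp (tendsto_id.atTop_mul_const hε))
  exact le_antisymm (ge_of_tendsto hlim (eventually_gt_atTop 0 |>.mono chernoff)) bot_le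

lemma ae_le_of_lintegral_exp_mul_le (hX : AEMeasurable X P)
    (h : ∀ s > 0, ∫⁻ ω, ENNReal.ofReal (rexp (s * X ω)) ∂P ≤ ENNReal.ofReal (rexp (s * c))) :
    ∀ᵐ ω ∂P, X ω ≤ c := by
  have hlt : ∀ n : ℕ, ∀ᵐ ω ∂P, X ω < c + 1 / (n + 1) := fun n => by
    simpa only [ae_iff, not_lt] using
      measure_add_le_eq_zero_of_lintegral_exp_mul_le hX h (ε := 1 / (n + 1)) (by positivity)
  filter_upwards [ae_all_iff.2 hlt] with ω hω
  refine le_of_forall_pos_lt_add fun ε hε => ?_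
  obtain ⟨n, hn⟩ := exists_nat_one_div_lt hε
  linarith [hω n]

variable [IsProbabilityMeasure P]

lemma lintegral_exp_mul_lt_of_ae_le (hle : ∀ᵐ ω ∂P, X ω ≤ c)
    (hne : ¬ ∀ᵐ ω ∂P, X ω = c) {s : ℝ} (hs : 0 < s) :
    ∫⁻ ω, ENNReal.ofReal (rexp (s * X ω)) ∂P < ENNReal.ofReal (rexp (s * c)) := by
  have hle' : (fun ω => ENNReal.ofReal (rexp (s * X ω))) ≤ᵐ[P]
      fun _ => ENNReal.ofReal (rexp (s * c)) := by
    filter_upwards [hle] with ω hω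
    exact ENNReal.ofReal_le_ofReal (exp_le_exp.2 (mul_le_mul_of_nonneg_left hω hs.le))
  have hne' : ∃ᵐ ω ∂P, ENNReal.ofReal (rexp (s * X ω)) ≠ ENNReal.ofReal (rexp (s * c)) := by
    refine (not_eventually.1 hne).mono fun ω hω heq => hω ?_
    rwa [ENNReal.ofReal_eq_ofReal_iff (exp_pos _).le (exp_pos _).le, exp_eq_exp,
      mul_right_inj' hs.ne'] at heq
  have hfin : ∫⁻ ω, ENNReal.ofReal (rexp (s * X ω)) ∂P ≠ ∞ :=
    ne_top_of_le_ne_top (by simp) (lintegral_mono_ae hle')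
  simpa using lintegral_strict_mono_of_ae_le_of_frequently_ae_lt aemeasurable_const hfin hle' hne'

theorem lintegral_exp_mul_lt_iff (hX : Measurable X) :
    (∀ s > 0, ∫⁻ ω, ENNReal.ofReal (rexp (s * X ω)) ∂P < ENNReal.ofReal (rexp (s * c))) ↔
      P {ω | X ω ≤ c} = 1 ∧ P {ω | X ω = c} < 1 := by
  rw [← ae_iff_prob_eq_one (by fun_prop), prob_le_one.lt_iff_ne, ne_eq,
    ← ae_iff_prob_eq_one (by fun_prop)]
  constructor
  · intro h
    refine ⟨ae_le_of_lintegral_exp_mul_le hX.aemeasurable fun s hs => (h s hs).le, fun hae => ?_⟩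
    have h1 := h 1 one_pos
    rw [lintegral_congr_ae (hae.mono fun ω hω => by rw [hω]), lintegral_const, measure_univ,
      mul_one] at h1
    exact h1.false
  · rintro ⟨hle, hne⟩ s hs
    exact lintegral_exp_mul_lt_of_ae_le hle hne hs

end ExponentialMoments

end ProbabilityTheory

theorem gaussian_mixture_subgaussian_characterization_general {Ω : Type*} [MeasureSpace Ω]
    [IsProbabilityMeasure (volume : Measure Ω)]
    (ξ Z : Ω → ℝ) (hξm : Measurable ξ) (hZm : Measurable Z)
    (hindep : IndepFun ξ Z)
    (hZ : Measure.map Z volume = gaussianReal 0 1)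
    (hξpos : ∀ ω, 0 ≤ ξ ω) (hξmean : (∫ ω, ξ ω) = 1) :
    (∫ ω, Real.sqrt (ξ ω) * Z ω) = 0 ∧
    (∫ ω, (Real.sqrt (ξ ω) * Z ω) ^ 2) = 1 ∧
    (∀ t : ℝ, (∫⁻ ω, ENNReal.ofReal (Real.exp (t * (Real.sqrt (ξ ω) * Z ω))))
        = ∫⁻ ω, ENNReal.ofReal (Real.exp (ξ ω * t ^ 2 / 2))) ∧
    ((∀ t : ℝ, t ≠ 0 →
        (∫⁻ ω, ENNReal.ofReal (Real.exp (t * (Real.sqrt (ξ ω) * Z ω))))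
          < ENNReal.ofReal (Real.exp (t ^ 2)))
      ↔ (volume {ω | ξ ω ≤ 2} = 1 ∧ volume {ω | ξ ω = 2} < 1)) := by
  have hZlaw : HasLaw Z (gaussianReal 0 1) := ⟨hZm.aemeasurable, hZ⟩
  have hσZ : IndepFun (fun ω => √(ξ ω)) Z := hindep.comp (by fun_prop) measurable_id
  have hmgf (t : ℝ) : ∫⁻ ω, ENNReal.ofReal (rexp (t * (√(ξ ω) * Z ω)))
      = ∫⁻ ω, ENNReal.ofReal (rexp (ξ ω * t ^ 2 / 2)) := by
    rw [lintegral_exp_mul_mul_of_indepFun_gaussianReal (by fun_prop) hZlaw hσZ t]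
    refine lintegral_congr fun ω => ?_
    rw [mul_pow, sq_sqrt (hξpos ω), NNReal.coe_one, one_mul, mul_comm (t ^ 2)]
  refine ⟨integral_mul_eq_zero_of_indepFun_gaussianReal (by fun_prop) hZlaw hσZ, ?_, hmgf, ?_⟩
  · simp [integral_mul_sq_of_indepFun_gaussianReal (by fun_prop) hZlaw hσZ, sq_sqrt (hξpos _),
      hξmean]
  rw [← lintegral_exp_mul_lt_iff hξm]
  simp_rw [hmgf]
  constructor
  · intro h s hs
    convert h √(2 * s) (by positivity) using 5 <;> rw [sq_sqrt (by positivity)] <;> ring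
  · intro h t ht
    convert h (t ^ 2 / 2) (by positivity) using 5 <;> ring

/-- For `X = √ξ · Z` with `ξ ≥ 0` independent of `Z ~ N(0,1)` and `E ξ = 1`:
`E X = 0`, `E X² = 1`, `E e^{tX} = E e^{ξ t²/2}` for all `t`, and
`E e^{tX} < e^{t²}` for all `t ≠ 0` iff `P(ξ ≤ 2) = 1` and `P(ξ = 2) < 1`. -/
theorem gaussian_mixture_subgaussian_characterization {Ω : Type*} [MeasureSpace Ω]
    [IsProbabilityMeasure (volume : Measure Ω)]
    (ξ Z : Ω → ℝ) (hξm : Measurable ξ) (hZm : Measurable Z)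
    (hindep : IndepFun ξ Z)
    (hZ : Measure.map Z volume = gaussianReal 0 1)
    (hξpos : ∀ ω, 0 ≤ ξ ω) (hξint : Integrable ξ) (hξmean : (∫ ω, ξ ω) = 1) :
    (∫ ω, Real.sqrt (ξ ω) * Z ω) = 0 ∧
    (∫ ω, (Real.sqrt (ξ ω) * Z ω) ^ 2) = 1 ∧
    (∀ t : ℝ, (∫⁻ ω, ENNReal.ofReal (Real.exp (t * (Real.sqrt (ξ ω) * Z ω))))
        = ∫⁻ ω, ENNReal.ofReal (Real.exp (ξ ω * t ^ 2 / 2))) ∧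
    ((∀ t : ℝ, t ≠ 0 →
        (∫⁻ ω, ENNReal.ofReal (Real.exp (t * (Real.sqrt (ξ ω) * Z ω))))
          < ENNReal.ofReal (Real.exp (t ^ 2)))
      ↔ (volume {ω | ξ ω ≤ 2} = 1 ∧ volume {ω | ξ ω = 2} < 1)) :=
  gaussian_mixture_subgaussian_characterization_general ξ Z hξm hZm hindep hZ hξpos hξmean
end

section
/- For 0 < p < 1, q = 1 - p, p ≠ q, the inequality p e^{qt} + q e^{-pt} ≤ e^{σ² t²/2} holds for all real t with σ² = (p-q)/(2(log p - log q)), and equality holds at t₀ = -2(log p - log q). -/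
/-! Put `c = (log p - log q) / 2`, so that `p = e^c / (2 cosh c)`, `q = e^{-c} / (2 cosh c)` and
`p - q = tanh c`. Then `p e^{qt} + q e^{-pt} = e^{-t tanh c / 2} cosh (c + t/2) / cosh c`, and the
bound is the inequality `log cosh u ≤ log cosh c + (tanh c / 2c) (u² - c²)`: the tangent line at
`c²` of the concave function `x ↦ log cosh √x`. Concavity amounts to `tanh x / x` decreasing on
`(0, ∞)`, which follows from the convexity of `sinh` there. Equality at `t₀ = -4c` is the case
`u = -c`. -/

open Real Set

namespace Real

theorem convexOn_sinh_Ici : ConvexOn ℝ (Ici 0) sinh := by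
  refine MonotoneOn.convexOn_of_deriv (convex_Ici 0) continuous_sinh.continuousOn
    differentiable_sinh.differentiableOn ?_
  rw [deriv_sinh, interior_Ici]
  intro x hx y hy hxy
  exact cosh_le_cosh.2 (by rwa [abs_of_pos hx, abs_of_pos hy])

theorem mul_sinh_le_mul_sinh {x y : ℝ} (hx : 0 ≤ x) (hxy : x ≤ y) :
    y * sinh x ≤ x * sinh y := by
  rcases hx.eq_or_lt with rfl | hx
  · simp
  have h := convexOn_sinh_Ici.secant_mono self_mem_Ici hx.le (hx.le.trans hxy) hx.ne'
    (hx.trans_le hxy).ne' hxy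
  rw [sinh_zero, sub_zero, sub_zero, sub_zero, sub_zero,
    div_le_div_iff₀ hx (hx.trans_le hxy)] at h
  linarith

theorem mul_tanh_le_mul_tanh {a b : ℝ} (ha : 0 ≤ a) (hab : a ≤ b) :
    a * tanh b ≤ b * tanh a := by
  have h := mul_sinh_le_mul_sinh (x := b - a) (y := b + a) (by linarith) (by linarith)
  rw [sinh_sub, sinh_add] at h
  rw [tanh_eq_sinh_div_cosh, tanh_eq_sinh_div_cosh, mul_div_assoc', mul_div_assoc',
    div_le_div_iff₀ (cosh_pos b) (cosh_pos a)]
  linarith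

theorem hasDerivAt_log_cosh (x : ℝ) : HasDerivAt (fun x ↦ log (cosh x)) (tanh x) x := by
  simpa [tanh_eq_sinh_div_cosh] using (hasDerivAt_cosh x).log (cosh_pos x).ne'

/-- As `tanh x / x` decreases, `tanh c / (2c) * x² - log (cosh x)` decreases on `[0, c]` and
increases on `[c, ∞)`. -/
theorem log_cosh_le_of_pos {c u : ℝ} (hc : 0 < c) (hu : 0 ≤ u) :
    log (cosh u) ≤ log (cosh c) + tanh c / (2 * c) * (u ^ 2 - c ^ 2) := by
  set F : ℝ → ℝ := fun x ↦ tanh c / (2 * c) * x ^ 2 - log (cosh x)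
  have hF : ∀ x, HasDerivAt F (tanh c / c * x - tanh x) x := fun x ↦ by
    refine (((hasDerivAt_pow 2 x).const_mul (tanh c / (2 * c))).sub
      (hasDerivAt_log_cosh x)).congr_deriv ?_
    field_simp
    ring
  have hFc : Continuous F := continuous_iff_continuousAt.2 fun x ↦ (hF x).continuousAt
  suffices F c ≤ F u by simp only [F] at this; linarith
  rcases le_total u c with huc | hcu
  · refine antitoneOn_of_hasDerivWithinAt_nonpos (convex_Icc 0 c) hFc.continuousOn
      (fun x _ ↦ (hF x).hasDerivWithinAt) (fun x hx ↦ ?_) ⟨hu, huc⟩ ⟨hc.le, le_rfl⟩ huc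
    rw [interior_Icc] at hx
    rw [sub_nonpos, div_mul_eq_mul_div, div_le_iff₀ hc]
    linarith [mul_tanh_le_mul_tanh hx.1.le hx.2.le]
  · refine monotoneOn_of_hasDerivWithinAt_nonneg (convex_Ici c) hFc.continuousOn
      (fun x _ ↦ (hF x).hasDerivWithinAt) (fun x hx ↦ ?_) self_mem_Ici hcu hcu
    rw [interior_Ici] at hx
    rw [sub_nonneg, div_mul_eq_mul_div, le_div_iff₀ hc]
    linarith [mul_tanh_le_mul_tanh hc.le hx.le]

theorem cosh_div_cosh_le {c : ℝ} (hc : c ≠ 0) (u : ℝ) :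
    cosh u / cosh c ≤ exp (tanh c / (2 * c) * (u ^ 2 - c ^ 2)) := by
  have hk : tanh |c| / (2 * |c|) = tanh c / (2 * c) := by
    rcases abs_choice c with h | h <;> rw [h]
    rw [tanh_neg, mul_neg, neg_div_neg_eq]
  have h := log_cosh_le_of_pos (abs_pos.2 hc) (abs_nonneg u)
  rw [cosh_abs, cosh_abs, sq_abs, sq_abs, hk] at h
  rw [div_le_iff₀ (cosh_pos c), ← exp_log (cosh_pos u), ← exp_log (cosh_pos c), ← exp_add]
  exact exp_le_exp.2 (by linarith)

end Real

section Bernoulli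

variable {p c : ℝ}

theorem mul_two_cosh_eq_exp_of_log_sub_log_eq (hp : 0 < p) (hp1 : p < 1)
    (hc : log p - log (1 - p) = 2 * c) : p * (2 * cosh c) = exp c := by
  have hq : 0 < 1 - p := by linarith
  have h2c : exp c * exp c * (1 - p) = p := by
    rw [← exp_add, ← two_mul, ← hc, exp_sub, exp_log hp, exp_log hq, div_mul_cancel₀ _ hq.ne']
  rw [cosh_eq, exp_neg]
  field_simp
  linear_combination -h2c

theorem tanh_eq_two_mul_sub_one_of_mul_two_cosh_eq_exp (h : p * (2 * cosh c) = exp c) :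
    tanh c = 2 * p - 1 := by
  rw [tanh_eq_sinh_div_cosh, div_eq_iff (cosh_pos c).ne', sinh_eq]
  rw [cosh_eq] at h ⊢
  linear_combination -h

theorem bernoulli_mgf_eq (h : p * (2 * cosh c) = exp c) (t : ℝ) :
    p * exp ((1 - p) * t) + (1 - p) * exp (-p * t) =
      exp (-(2 * p - 1) * t / 2) * (cosh (c + t / 2) / cosh c) := by
  have h_neg : (1 - p) * (2 * cosh c) = exp (-c) := by
    rw [sub_mul, h, cosh_eq]
    ring
  have hexp_p : exp ((1 - p) * t) = exp (-(2 * p - 1) * t / 2) * exp (t / 2) := by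
    rw [← exp_add]; ring_nf
  have hexp_q : exp (-p * t) = exp (-(2 * p - 1) * t / 2) * exp (-(t / 2)) := by
    rw [← exp_add]; ring_nf
  rw [mul_div_assoc', eq_div_iff (cosh_pos c).ne', cosh_eq (c + t / 2), neg_add, exp_add,
    exp_add, ← h, ← h_neg, hexp_p, hexp_q]
  ring

end Bernoulli

/-- Subgaussian bound for the centered Bernoulli distribution: for `0 < p < 1`, `q = 1 - p`,
`p ≠ q`, one has `p e^{qt} + q e^{-pt} ≤ e^{σ² t²/2}` for all `t`, with
`σ² = (p - q)/(2(log p - log q))`, and equality holds at `t₀ = -2(log p - log q)`. -/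
theorem bernoulli_subgaussian_constant (p : ℝ) (hp : 0 < p) (hp1 : p < 1) (hpq : p ≠ 1 - p) :
    (∀ t : ℝ, p * Real.exp ((1 - p) * t) + (1 - p) * Real.exp (-p * t)
        ≤ Real.exp ((p - (1 - p)) / (2 * (Real.log p - Real.log (1 - p))) * t ^ 2 / 2)) ∧
    p * Real.exp ((1 - p) * (-2 * (Real.log p - Real.log (1 - p)))) +
        (1 - p) * Real.exp (-p * (-2 * (Real.log p - Real.log (1 - p))))
      = Real.exp ((p - (1 - p)) / (2 * (Real.log p - Real.log (1 - p))) *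
          (-2 * (Real.log p - Real.log (1 - p))) ^ 2 / 2) := by
  obtain ⟨c, hc⟩ : ∃ c, log p - log (1 - p) = 2 * c :=
    ⟨_, (mul_div_cancel₀ _ two_ne_zero).symm⟩
  have hpc := mul_two_cosh_eq_exp_of_log_sub_log_eq hp hp1 hc
  have hc0 : c ≠ 0 := by
    rintro rfl
    rw [cosh_zero, exp_zero] at hpc
    exact hpq (by linarith)
  have htanh := tanh_eq_two_mul_sub_one_of_mul_two_cosh_eq_exp hpc
  simp only [hc, bernoulli_mgf_eq hpc]
  refine ⟨fun t ↦ ?_, ?_⟩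
  · calc exp (-(2 * p - 1) * t / 2) * (cosh (c + t / 2) / cosh c)
        ≤ exp (-(2 * p - 1) * t / 2) * exp (tanh c / (2 * c) * ((c + t / 2) ^ 2 - c ^ 2)) := by
          gcongr
          exact cosh_div_cosh_le hc0 _
      _ = exp ((p - (1 - p)) / (2 * (2 * c)) * t ^ 2 / 2) := by
          rw [← exp_add, htanh, exp_eq_exp]
          field_simp
          ring
  · rw [show c + -2 * (2 * c) / 2 = -c by ring, cosh_neg, div_self (cosh_pos c).ne', mul_one,
      exp_eq_exp]
    field_simp
    ring
end

section
/- Let X be a random variable with density p such that ∫ p(x)² e^{x²/2} dx < ∞. Then the characteristic function f(t) = E e^{itX} extends to an entire function and satisfies f(t) = e^{-t²/2} Σ_{k≥0} (E H_k(X)/k!) (it)^k for all complex t. -/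
/-!
Expanding `exp(s x - s²/2) = exp(s x) · exp(-s²/2)` as a Cauchy product gives the generating
function `∑ₖ Hₖ(x) sᵏ / k! = exp(s x - s²/2)`, and, with every term replaced by its norm, the
bound `∑ₖ |Hₖ(x) sᵏ / k!| ≤ exp(|s| |x| + |s|²/2)`. By AM-GM,
`e^{r|x|} |p(x)| ≤ e^{4r²} e^{-x²/4} + p(x)² e^{x²/2}` is integrable for every `r`, so the
series can be integrated against `p` term by term for every complex `s`:
`∑ₖ (E Hₖ(X) / k!) sᵏ = E exp(s X - s²/2)`. A power series converging on all of `ℂ` is entire,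
and at `s = i t` the right-hand side is `e^{t²/2} E e^{itX}`.
-/

open MeasureTheory Complex Polynomial Finset Function
open scoped Nat

theorem hasSum_sum_mul_antidiagonal_of_summable_norm {R : Type*} [NormedRing R] [CompleteSpace R]
    {f g : ℕ → R} {a b : R} (hf : HasSum f a) (hg : HasSum g b)
    (hf' : Summable (‖f ·‖)) (hg' : Summable (‖g ·‖)) :
    HasSum (fun n => ∑ kl ∈ antidiagonal n, f kl.1 * g kl.2) (a * b) := by
  have := (summable_norm_sum_mul_antidiagonal_of_summable_norm hf' hg').of_norm.hasSum
  rwa [← tsum_mul_tsum_eq_tsum_sum_antidiagonal_of_summable_norm hf' hg', hf.tsum_eq,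
    hg.tsum_eq] at this

theorem norm_extend_zero {ι κ E : Type*} [SeminormedAddGroup E] (g : ι → κ) (u : ι → E) (j : κ) :
    ‖extend g u 0 j‖ = extend g (‖u ·‖) 0 j := by
  rw [apply_extend (g := u) norm]
  congr
  funext
  simp

theorem differentiable_tsum_mul_pow {𝕜 : Type*} [RCLike 𝕜] {a : ℕ → 𝕜}
    (ha : ∀ w, Summable fun n => a n * w ^ n) : Differentiable 𝕜 fun w => ∑' n, a n * w ^ n := by
  set P := FormalMultilinearSeries.ofScalars 𝕜 a
  have hrad : P.radius = ⊤ := ENNReal.eq_top_of_forall_nnreal_le fun r =>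
    P.le_radius_of_tendsto (l := 0) <| by
      simpa [P, FormalMultilinearSeries.ofScalars_norm] using
        (ha ((r : ℝ) : 𝕜)).tendsto_atTop_zero.norm
  have hP := P.hasFPowerSeriesOnBall (hrad ▸ ENNReal.zero_lt_top)
  rw [hrad] at hP
  intro w
  have := (hP.differentiableOn w (by simp)).differentiableAt (by simp)
  simpa [P, ← FormalMultilinearSeries.ofScalarsSum.eq_def,
    FormalMultilinearSeries.ofScalarsSum_eq_tsum] using this

theorem hasSum_integral_of_sum_range_norm_le {α E : Type*} [MeasurableSpace α] {μ : Measure α}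
    [NormedAddCommGroup E] [NormedSpace ℝ E] {F : ℕ → α → E} {f : α → E} {G : α → ℝ}
    (hF : ∀ n, AEStronglyMeasurable (F n) μ) (hG : Integrable G μ)
    (hle : ∀ N, ∀ᵐ x ∂μ, ∑ n ∈ range N, ‖F n x‖ ≤ G x) (hf : ∀ᵐ x ∂μ, HasSum (F · x) (f x)) :
    HasSum (fun n => ∫ x, F n x ∂μ) (∫ x, f x ∂μ) := by
  have hFint (n : ℕ) : Integrable (F n) μ := hG.mono' (hF n) <| (hle (n + 1)).mono fun x hx =>
    (single_le_sum (f := fun k => ‖F k x‖) (fun _ _ => norm_nonneg _)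
      (self_mem_range_succ n)).trans hx
  have hsum : Summable fun n => ∫ x, ‖F n x‖ ∂μ :=
    summable_of_sum_range_le (fun n => integral_nonneg fun _ => norm_nonneg _) fun N => by
      rw [← integral_finsetSum _ fun n _ => (hFint n).norm]
      exact integral_mono_ae (integrable_finsetSum _ fun n _ => (hFint n).norm) hG (hle N)
  rw [integral_congr_ae (hf.mono fun x hx => hx.tsum_eq.symm)]
  exact hasSum_integral_of_summable_integral_norm hFint hsum

theorem Nat.two_pow_mul_factorial_mul_doubleFactorial (c : ℕ) :
    2 ^ c * c ! * (2 * c - 1)‼ = (2 * c)! := by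
  cases c with
  | zero => rfl
  | succ c =>
    rw [show 2 * (c + 1) - 1 = 2 * c + 1 by omega, ← Nat.doubleFactorial_two_mul,
      show 2 * (c + 1) = 2 * c + 1 + 1 by ring, Nat.factorial_eq_mul_doubleFactorial]

theorem Polynomial.coeff_hermite_two_mul_add_div_factorial {K : Type*} [Field K] [CharZero K]
    (c a : ℕ) :
    ((hermite (2 * c + a)).coeff a : K) / (2 * c + a)! = (-1 / 2) ^ c / c ! / a ! := by
  have hchoose := Nat.choose_mul_factorial_mul_factorial (Nat.le_add_left a (2 * c))
  rw [Nat.add_sub_cancel, ← Nat.two_pow_mul_factorial_mul_doubleFactorial] at hchoose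
  have hc : (c ! : K) ≠ 0 := Nat.cast_ne_zero.2 c.factorial_ne_zero
  have ha : (a ! : K) ≠ 0 := Nat.cast_ne_zero.2 a.factorial_ne_zero
  rw [div_eq_iff (Nat.cast_ne_zero.2 (Nat.factorial_ne_zero _)), coeff_hermite_explicit,
    ← hchoose, div_pow]
  push_cast
  field_simp

/-- `extend (2 * ·) u 0` spreads `u` over the even indices: here it is the sequence of
coefficients of `exp(-s²/2)` as a power series in `s`. -/
theorem aeval_hermite_mul_pow_div_factorial_eq_sum_antidiagonal (z s : ℂ) (n : ℕ) :
    aeval z (hermite n) * s ^ n / n ! = ∑ kl ∈ antidiagonal n,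
      (z * s) ^ kl.1 / kl.1 ! * extend (2 * ·) (fun c => (-s ^ 2 / 2) ^ c / c !) 0 kl.2 := by
  rw [aeval_eq_sum_range, natDegree_hermite, sum_mul, sum_div,
    Nat.sum_antidiagonal_eq_sum_range_succ_mk]
  refine sum_congr rfl fun a ha => ?_
  have hle : a ≤ n := Nat.lt_succ_iff.mp (mem_range.mp ha)
  rcases Nat.even_or_odd (n - a) with ⟨c, hc⟩ | hodd
  · obtain rfl : n = 2 * c + a := by omega
    rw [Nat.add_sub_cancel, (mul_right_injective₀ two_ne_zero).extend_apply, zsmul_eq_mul]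
    linear_combination (z ^ a * s ^ (2 * c + a)) *
      coeff_hermite_two_mul_add_div_factorial (K := ℂ) c a
  · have hcoeff : (hermite n).coeff a = 0 :=
      coeff_hermite_of_odd_add ((by omega : n - a + 2 * a = n + a) ▸ hodd.add_even (even_two_mul a))
    rw [extend_apply' _ _ _ fun ⟨c, hc⟩ => Nat.not_even_iff_odd.2 hodd ⟨c, by simp at hc; omega⟩]
    simp [hcoeff]

theorem hasSum_aeval_hermite_mul_pow_div_factorial (z s : ℂ) :
    HasSum (fun n => aeval z (hermite n) * s ^ n / n !) (cexp (s * z - s ^ 2 / 2)) := by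
  have hexp (w : ℂ) : HasSum (fun n => w ^ n / n !) (cexp w) := by
    rw [Complex.exp_eq_exp_ℂ]
    exact NormedSpace.expSeries_div_hasSum_exp w
  have hnorm (w : ℂ) : Summable (fun n => ‖w ^ n / (n ! : ℂ)‖) := by
    simpa [norm_div, norm_pow] using Real.summable_pow_div_factorial ‖w‖
  have hinj : Injective (2 * · : ℕ → ℕ) := mul_right_injective₀ two_ne_zero
  have hprod := hasSum_sum_mul_antidiagonal_of_summable_norm (hexp (z * s))
    ((hasSum_extend_zero hinj).2 (hexp (-s ^ 2 / 2))) (hnorm _)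
    (by simpa only [norm_extend_zero] using (summable_extend_zero hinj).2 (hnorm _))
  rw [sub_eq_add_neg, ← neg_div, Complex.exp_add, mul_comm s]
  exact (funext (aeval_hermite_mul_pow_div_factorial_eq_sum_antidiagonal z s)).symm ▸ hprod

theorem sum_range_norm_aeval_hermite_mul_pow_div_factorial_le (z s : ℂ) (N : ℕ) :
    ∑ n ∈ range N, ‖aeval z (hermite n) * s ^ n / (n ! : ℂ)‖ ≤
      Real.exp (‖z‖ * ‖s‖ + ‖s‖ ^ 2 / 2) := by
  have hexp (r : ℝ) : HasSum (fun n => r ^ n / n !) (Real.exp r) := by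
    rw [Real.exp_eq_exp_ℝ]
    exact NormedSpace.expSeries_div_hasSum_exp r
  have hinj : Injective (2 * · : ℕ → ℕ) := mul_right_injective₀ two_ne_zero
  have hf : HasSum (fun a => ‖(z * s) ^ a / (a ! : ℂ)‖) (Real.exp (‖z‖ * ‖s‖)) := by
    simpa [norm_div, norm_pow] using hexp (‖z‖ * ‖s‖)
  have hg : HasSum (fun j => ‖extend (2 * ·) (fun c => (-s ^ 2 / 2) ^ c / (c ! : ℂ)) 0 j‖)
      (Real.exp (‖s‖ ^ 2 / 2)) := by
    simpa [norm_extend_zero, norm_div, norm_pow] using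
      (hasSum_extend_zero hinj).2 (hexp (‖s‖ ^ 2 / 2))
  have hprod := hasSum_sum_mul_antidiagonal_of_summable_norm hf hg
    (by simpa using hf.summable) (by simpa using hg.summable)
  rw [Real.exp_add]
  refine (sum_le_sum fun n _ => ?_).trans (sum_le_hasSum _ (fun n _ => by positivity) hprod)
  rw [aeval_hermite_mul_pow_div_factorial_eq_sum_antidiagonal]
  exact (norm_sum_le _ _).trans (sum_le_sum fun kl _ => norm_mul_le _ _)

theorem integrable_exp_mul_abs_mul {p : ℝ → ℝ} (hpm : AEStronglyMeasurable p)
    (hfin : Integrable (fun x => p x ^ 2 * Real.exp (x ^ 2 / 2))) (r : ℝ) :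
    Integrable (fun x => Real.exp (r * |x|) * p x) := by
  have hgauss :=
    (integrable_exp_neg_mul_sq (b := 1 / 4) (by norm_num)).const_mul (Real.exp (4 * r ^ 2))
  refine (hgauss.add hfin).mono' (by fun_prop) (ae_of_all _ fun x => ?_)
  set u := Real.exp (r * |x| - x ^ 2 / 4)
  set v := |p x| * Real.exp (x ^ 2 / 4)
  have huv : ‖Real.exp (r * |x|) * p x‖ = u * v := by
    rw [norm_mul, Real.norm_eq_abs, Real.abs_exp, Real.norm_eq_abs, mul_left_comm,
      ← Real.exp_add]
    ring_nf
  have hu : u ^ 2 ≤ Real.exp (4 * r ^ 2) * Real.exp (-(1 / 4) * x ^ 2) := by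
    rw [← Real.exp_add, ← Real.exp_nat_mul]
    exact Real.exp_le_exp.2 (by nlinarith [sq_nonneg (2 * r - |x| / 2), sq_abs x])
  have hv : v ^ 2 = p x ^ 2 * Real.exp (x ^ 2 / 2) := by
    rw [mul_pow, sq_abs, ← Real.exp_nat_mul]
    ring_nf
  rw [huv, Pi.add_apply]
  nlinarith [sq_nonneg (u - v)]

theorem hasSum_integral_aeval_hermite_mul {p : ℝ → ℝ} (hpm : AEStronglyMeasurable p)
    (hfin : Integrable (fun x => p x ^ 2 * Real.exp (x ^ 2 / 2))) (s : ℂ) :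
    HasSum (fun k => ((∫ x, aeval x (hermite k) * p x : ℝ) : ℂ) / k ! * s ^ k)
      (∫ x : ℝ, cexp (s * x - s ^ 2 / 2) * p x) := by
  set F : ℕ → ℝ → ℂ := fun k x => ((aeval x (hermite k) * p x : ℝ) : ℂ) * (s ^ k / k !)
  have hF (k : ℕ) (x : ℝ) : F k x = aeval (x : ℂ) (hermite k) * s ^ k / k ! * p x := by
    have hcast : ((aeval x (hermite k) : ℝ) : ℂ) = aeval (x : ℂ) (hermite k) := by
      simpa using (aeval_algebraMap_apply ℂ x (hermite k)).symm
    simp only [F, Complex.ofReal_mul, hcast]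
    ring
  have hmeas (k : ℕ) : AEStronglyMeasurable (F k) := by
    simp only [F]
    fun_prop
  have hG := (integrable_exp_mul_abs_mul hpm hfin ‖s‖).norm.const_mul (Real.exp (‖s‖ ^ 2 / 2))
  have hintegral (k : ℕ) :
      ∫ x, F k x = ((∫ x, aeval x (hermite k) * p x : ℝ) : ℂ) / k ! * s ^ k := by
    rw [integral_mul_const, integral_complex_ofReal]
    ring
  simp_rw [← hintegral]
  refine hasSum_integral_of_sum_range_norm_le hmeas hG (fun N => ae_of_all _ fun x => ?_)
    (ae_of_all _ fun x => ?_)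
  · calc ∑ n ∈ range N, ‖F n x‖
        _ = (∑ n ∈ range N, ‖aeval (x : ℂ) (hermite n) * s ^ n / (n ! : ℂ)‖) * |p x| := by
          simp only [hF, norm_mul, ← sum_mul, Complex.norm_real, Real.norm_eq_abs]
        _ ≤ Real.exp (‖(x : ℂ)‖ * ‖s‖ + ‖s‖ ^ 2 / 2) * |p x| := by
          gcongr
          exact sum_range_norm_aeval_hermite_mul_pow_div_factorial_le _ _ _
        _ = Real.exp (‖s‖ ^ 2 / 2) * ‖Real.exp (‖s‖ * |x|) * p x‖ := by
          rw [norm_mul, Real.norm_eq_abs, Real.abs_exp, Real.norm_eq_abs, ← mul_assoc,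
            ← Real.exp_add, Complex.norm_real, Real.norm_eq_abs]
          ring_nf
  · simp_rw [hF]
    exact (hasSum_aeval_hermite_mul_pow_div_factorial x s).mul_right _

theorem charFun_entire_hermite_expansion_general (p : ℝ → ℝ) (hpm : Measurable p)
    (hfin : Integrable (fun x => p x ^ 2 * Real.exp (x ^ 2 / 2))) :
    ∃ F : ℂ → ℂ, Differentiable ℂ F ∧
      (∀ t : ℝ, F t = ∫ x : ℝ, Complex.exp (Complex.I * t * x) * ((p x : ℝ) : ℂ)) ∧
      (∀ t : ℂ, F t = Complex.exp (-t ^ 2 / 2) *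
        ∑' k : ℕ, (((∫ x, (Polynomial.aeval x (Polynomial.hermite k) : ℝ) * p x : ℝ) : ℂ)
            / (k.factorial : ℂ)) * (Complex.I * t) ^ k) := by
  have hseries := hasSum_integral_aeval_hermite_mul hpm.aestronglyMeasurable hfin
  refine ⟨fun z => cexp (-z ^ 2 / 2) *
    ∑' k, ((∫ x, aeval x (hermite k) * p x : ℝ) : ℂ) / k ! * (I * z) ^ k, ?_, fun t => ?_,
    fun t => rfl⟩
  · have hgauss : Differentiable ℂ fun z : ℂ => cexp (-z ^ 2 / 2) := by fun_prop
    exact hgauss.mul ((differentiable_tsum_mul_pow fun w => (hseries w).summable).comp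
      (differentiable_id.const_mul I))
  · dsimp only
    rw [(hseries (I * t)).tsum_eq, ← integral_const_mul]
    congr 1
    funext x
    rw [← mul_assoc, ← Complex.exp_add]
    congr 2
    linear_combination (-(t : ℂ) ^ 2 / 2) * I_sq

/-- If `X` has density `p` with `∫ p(x)² e^{x²/2} dx < ∞`, then its characteristic function
extends to an entire function `F` with `F(t) = e^{-t²/2} Σ_k (E H_k(X)/k!) (it)^k` on all
of `ℂ`, where `H_k` are the probabilists' Hermite polynomials. -/
theorem charFun_entire_hermite_expansion (p : ℝ → ℝ) (hpm : Measurable p)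
    (hp : ∀ x, 0 ≤ p x) (hdens : (∫ x, p x) = 1)
    (hfin : Integrable (fun x => p x ^ 2 * Real.exp (x ^ 2 / 2))) :
    ∃ F : ℂ → ℂ, Differentiable ℂ F ∧
      (∀ t : ℝ, F t = ∫ x : ℝ, Complex.exp (Complex.I * t * x) * ((p x : ℝ) : ℂ)) ∧
      (∀ t : ℂ, F t = Complex.exp (-t ^ 2 / 2) *
        ∑' k : ℕ, (((∫ x, (Polynomial.aeval x (Polynomial.hermite k) : ℝ) * p x : ℝ) : ℂ)
            / (k.factorial : ℂ)) * (Complex.I * t) ^ k) :=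
  charFun_entire_hermite_expansion_general p hpm hfin
end
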